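/- arXiv:1607.03372 — 9 statements merged into one kernel-verified Lean document; each statement's English description precedes it below -/
import Mathlib

section
/- Let Γ be a simple graph that is strongly regular with parameters (275,112,30,56), and let C be a 5-clique of Γ. Then every vertex of Γ not belonging to C is adjacent to exactly 2 vertices of C. -/
/-!
For a vertex `w` outside the clique `C`, let `f w` be the number of its neighbours in `C`.
Double counting edges and paths of length two from `C` to its complement gives
`∑ f = 5 · (112 - 4) = 540` and `∑ f² = 540 + 5 · 4 · (30 - 3) = 1080` over the `270` outside
vertices, so `∑ (f - 2)² = 1080 - 4 · 540 + 4 · 270 = 0` and `f` is constantly `2`.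
-/

open Finset

theorem Finset.sum_sq_card_filter_eq_sum_sum_card_filter_and {α β : Type*} (s : Finset α)
    (t : Finset β) (r : α → β → Prop) [∀ x y, Decidable (r x y)] :
    ∑ x ∈ s, #{y ∈ t | r x y} ^ 2 = ∑ y ∈ t, ∑ z ∈ t, #{x ∈ s | r x y ∧ r x z} := by
  simp only [card_filter, sq, sum_mul_sum, ← ite_and, mul_ite, mul_one, mul_zero]
  rw [sum_comm]
  refine sum_congr rfl fun y _ => ?_
  rw [sum_comm]
  refine sum_congr rfl fun z _ => sum_congr rfl fun x _ => ?_
  simp only [and_comm]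

theorem Finset.eq_of_sum_eq_of_sum_sq_eq {ι : Type*} (s : Finset ι) (f : ι → ℕ) (c : ℕ)
    (h₁ : ∑ i ∈ s, f i = #s * c) (h₂ : ∑ i ∈ s, f i ^ 2 = #s * c ^ 2) :
    ∀ i ∈ s, f i = c := by
  have hvar : ∑ i ∈ s, ((f i : ℤ) - c) ^ 2 = 0 := by
    have h₁' : ∑ i ∈ s, (f i : ℤ) = #s * c := by exact_mod_cast h₁
    have h₂' : ∑ i ∈ s, (f i : ℤ) ^ 2 = #s * c ^ 2 := by exact_mod_cast h₂
    simp only [sub_sq, sum_add_distrib, sum_sub_distrib, ← sum_mul, ← mul_sum, sum_const,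
      nsmul_eq_mul, h₁', h₂']
    ring
  intro i hi
  have hi_zero := (sum_eq_zero_iff_of_nonneg fun j _ => sq_nonneg ((f j : ℤ) - c)).1 hvar i hi
  exact_mod_cast sub_eq_zero.1 (pow_eq_zero_iff two_ne_zero |>.1 hi_zero)

namespace SimpleGraph

variable {V : Type*} [Fintype V] [DecidableEq V] {Γ : SimpleGraph V} [DecidableRel Γ.Adj]
  {C : Finset V}

theorem IsClique.card_filter_compl_adj {k : ℕ} (hΓ : Γ.IsRegularOfDegree k) (hC : Γ.IsClique C)
    {a : V} (ha : a ∈ C) : #{w ∈ Cᶜ | Γ.Adj w a} = k + 1 - #C := by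
  have houtside : {w ∈ Cᶜ | Γ.Adj w a} = Γ.neighborFinset a \ C := by
    ext w; simp [adj_comm, and_comm]
  have hinside : Γ.neighborFinset a ∩ C = C.erase a := by
    ext w
    simp only [mem_inter, mem_neighborFinset, mem_erase]
    exact ⟨fun ⟨haw, hw⟩ => ⟨haw.ne', hw⟩, fun ⟨hwa, hw⟩ => ⟨hC ha hw hwa.symm, hw⟩⟩
  have hsplit := card_sdiff_add_card_inter (Γ.neighborFinset a) C
  rw [hinside, card_erase_of_mem ha, card_neighborFinset_eq_degree, hΓ.degree_eq] at hsplit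
  have hC_pos := C.card_pos.2 ⟨a, ha⟩
  rw [houtside]
  omega

theorem IsClique.card_filter_compl_adj_adj {n k ℓ μ : ℕ} (hΓ : Γ.IsSRGWith n k ℓ μ)
    (hC : Γ.IsClique C) {a b : V} (ha : a ∈ C) (hb : b ∈ C) (hab : a ≠ b) :
    #{w ∈ Cᶜ | Γ.Adj w a ∧ Γ.Adj w b} = ℓ + 2 - #C := by
  set N := Γ.neighborFinset a ∩ Γ.neighborFinset b
  have hN : #N = ℓ := by
    rw [← hΓ.of_adj a b (hC ha hb hab), ← Set.toFinset_card]
    congr 1; ext w; simp [N, mem_commonNeighbors]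
  have houtside : {w ∈ Cᶜ | Γ.Adj w a ∧ Γ.Adj w b} = N \ C := by
    ext w; simp [N, adj_comm, and_comm]
  have hinside : N ∩ C = (C.erase a).erase b := by
    ext w
    simp only [N, mem_inter, mem_neighborFinset, mem_erase]
    exact ⟨fun ⟨⟨haw, hbw⟩, hw⟩ => ⟨hbw.ne', haw.ne', hw⟩,
      fun ⟨hwb, hwa, hw⟩ => ⟨⟨hC ha hw hwa.symm, hC hb hw hwb.symm⟩, hw⟩⟩
  have hsplit := card_sdiff_add_card_inter N C
  rw [hinside, card_erase_of_mem (mem_erase.2 ⟨hab.symm, hb⟩), card_erase_of_mem ha, hN] at hsplit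
  have hC_gt := one_lt_card.2 ⟨a, ha, b, hb, hab⟩
  rw [houtside]
  omega

theorem IsClique.sum_card_filter_adj {k : ℕ} (hΓ : Γ.IsRegularOfDegree k) (hC : Γ.IsClique C) :
    ∑ w ∈ Cᶜ, #{u ∈ C | Γ.Adj w u} = #C * (k + 1 - #C) := by
  rw [← smul_eq_mul, ← sum_const]
  exact (sum_card_bipartiteAbove_eq_sum_card_bipartiteBelow _).trans
    (sum_congr rfl fun a ha => hC.card_filter_compl_adj hΓ ha)

theorem IsClique.sum_card_filter_adj_sq {n k ℓ μ : ℕ} (hΓ : Γ.IsSRGWith n k ℓ μ)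
    (hC : Γ.IsClique C) :
    ∑ w ∈ Cᶜ, #{u ∈ C | Γ.Adj w u} ^ 2 =
      #C * ((k + 1 - #C) + (#C - 1) * (ℓ + 2 - #C)) := by
  rw [sum_sq_card_filter_eq_sum_sum_card_filter_and, ← smul_eq_mul, ← sum_const]
  refine sum_congr rfl fun a ha => ?_
  rw [← add_sum_erase C _ ha]
  simp only [and_self]
  rw [hC.card_filter_compl_adj hΓ.regular ha,
    sum_congr rfl fun b hb => hC.card_filter_compl_adj_adj hΓ ha (mem_of_mem_erase hb)
      (ne_of_mem_erase hb).symm,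
    sum_const, card_erase_of_mem ha, smul_eq_mul]

end SimpleGraph

/-- In a strongly regular graph with parameters (275,112,30,56), every vertex not
belonging to a 5-clique C is adjacent to exactly 2 vertices of C. -/
theorem srg_275_five_clique_outside_vertex_adj_two
    {V : Type*} [Fintype V] (Γ : SimpleGraph V) [DecidableRel Γ.Adj]
    (hΓ : Γ.IsSRGWith 275 112 30 56)
    (C : Finset V) (hC : Γ.IsNClique 5 C) (v : V) (hv : v ∉ C) :
    {u : V | u ∈ C ∧ Γ.Adj v u}.ncard = 2 := by
  classical
  have hC_card : #C = 5 := hC.card_eq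
  have hCompl_card : #Cᶜ = 270 := by rw [card_compl, hC_card, hΓ.card]
  have h₁ : ∑ w ∈ Cᶜ, #{u ∈ C | Γ.Adj w u} = #Cᶜ * 2 := by
    rw [hC.isClique.sum_card_filter_adj hΓ.regular, hC_card, hCompl_card]
  have h₂ : ∑ w ∈ Cᶜ, #{u ∈ C | Γ.Adj w u} ^ 2 = #Cᶜ * 2 ^ 2 := by
    rw [hC.isClique.sum_card_filter_adj_sq hΓ, hC_card, hCompl_card]
    norm_num
  rw [← eq_of_sum_eq_of_sum_sq_eq _ _ 2 h₁ h₂ v (mem_compl.2 hv), ← Set.ncard_coe_finset,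
    coe_filter]
end

section
/- Let s, t, α be positive integers with α ≤ min(s+1, t+1), and let Γ be a simple graph on v vertices that is strongly regular with parameters (v, s(t+1), s−1+t(α−1), (t+1)α), where α·v = (s+1)(st+α) (i.e., Γ is a pseudogeometric (s,t,α)-graph). If C is an (s+1)-clique of Γ, then every vertex of Γ not belonging to C is adjacent to exactly α vertices of C. -/
open Finset

/-- Let Γ be a pseudogeometric (s,t,α)-graph, i.e. a strongly regular graph with
parameters (v, s(t+1), s−1+t(α−1), (t+1)α) where α·v = (s+1)(st+α), for positive
integers s, t, α with α ≤ min(s+1, t+1).  If C is an (s+1)-clique of Γ, then every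
vertex not belonging to C is adjacent to exactly α vertices of C. -/
theorem pseudogeometric_clique_outside_vertex_adj_alpha
    {V : Type*} [Fintype V] (Γ : SimpleGraph V) [DecidableRel Γ.Adj]
    (s t α : ℕ) (hs : 0 < s) (ht : 0 < t) (hα : 0 < α)
    (hαs : α ≤ s + 1) (hαt : α ≤ t + 1)
    (hcard : α * Fintype.card V = (s + 1) * (s * t + α))
    (hΓ : Γ.IsSRGWith (Fintype.card V) (s * (t + 1)) (s - 1 + t * (α - 1)) ((t + 1) * α))
    (C : Finset V) (hC : Γ.IsNClique (s + 1) C) (v : V) (hv : v ∉ C) :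
    {u : V | u ∈ C ∧ Γ.Adj v u}.ncard = α := by
  classical
  set X : V → ℕ := fun w => (C.filter (fun u => Γ.Adj w u)).card with hX
  have hCcard : C.card = s + 1 := hC.2
  have hclique : ∀ ⦃a⦄, a ∈ C → ∀ ⦃b⦄, b ∈ C → a ≠ b → Γ.Adj a b := by
    intro a ha b hb hab
    exact hC.1 (by simpa using ha) (by simpa using hb) hab
  -- neighbors of a clique vertex inside C
  have hinC : ∀ u ∈ C, (Γ.neighborFinset u).filter (· ∈ C) = C.erase u := by
    intro u hu
    ext w
    simp only [mem_filter, SimpleGraph.mem_neighborFinset, mem_erase]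
    constructor
    · rintro ⟨ha, hw⟩
      exact ⟨fun h => Γ.irrefl (h ▸ ha), hw⟩
    · rintro ⟨hne, hw⟩
      exact ⟨hclique hu hw (Ne.symm hne), hw⟩
  -- neighbors of a clique vertex outside C : k - s = s*t
  have h1 : ∀ u ∈ C, (Cᶜ.filter (fun w => Γ.Adj w u)).card = s * t := by
    intro u hu
    have hsplit := Finset.card_filter_add_card_filter_not
      (s := Γ.neighborFinset u) (p := (· ∈ C))
    rw [Γ.card_neighborFinset_eq_degree, hΓ.regular u, hinC u hu,
      Finset.card_erase_of_mem hu, hCcard] at hsplit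
    have heq : (Γ.neighborFinset u).filter (fun w => ¬ w ∈ C)
        = Cᶜ.filter (fun w => Γ.Adj w u) := by
      ext w
      simp only [mem_filter, SimpleGraph.mem_neighborFinset, mem_compl]
      constructor
      · rintro ⟨ha, hw⟩; exact ⟨hw, ha.symm⟩
      · rintro ⟨hw, ha⟩; exact ⟨ha.symm, hw⟩
    rw [heq] at hsplit
    have : s + 1 - 1 = s := by omega
    rw [this] at hsplit
    have hk : s * (t + 1) = s * t + s := by ring
    omega
  -- common neighbors of two distinct clique vertices outside C : λ - (s-1) = t*(α-1)
  have h2 : ∀ u ∈ C, ∀ u' ∈ C, u ≠ u' →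
      (Cᶜ.filter (fun w => Γ.Adj w u ∧ Γ.Adj w u')).card = t * (α - 1) := by
    intro u hu u' hu' hne
    have hadj : Γ.Adj u u' := hclique hu hu' hne
    set F := (Γ.commonNeighbors u u').toFinset with hF
    have hFcard : F.card = s - 1 + t * (α - 1) := by
      rw [hF, Set.toFinset_card]
      exact hΓ.of_adj u u' hadj
    have hFC : F.filter (· ∈ C) = (C.erase u).erase u' := by
      ext w
      simp only [hF, mem_filter, Set.mem_toFinset, SimpleGraph.mem_commonNeighbors,
        mem_erase, SimpleGraph.mem_neighborSet]
      constructor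
      · rintro ⟨⟨ha, ha'⟩, hw⟩
        exact ⟨fun h => Γ.irrefl (h ▸ ha'), fun h => Γ.irrefl (h ▸ ha), hw⟩
      · rintro ⟨hne', hne'', hw⟩
        exact ⟨⟨hclique hu hw (Ne.symm hne''), hclique hu' hw (Ne.symm hne')⟩, hw⟩
    have hu'e : u' ∈ C.erase u := Finset.mem_erase.2 ⟨Ne.symm hne, hu'⟩
    have hFCcard : (F.filter (· ∈ C)).card = s - 1 := by
      rw [hFC, Finset.card_erase_of_mem hu'e, Finset.card_erase_of_mem hu, hCcard]
      omega
    have hsplit := Finset.card_filter_add_card_filter_not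
      (s := F) (p := (· ∈ C))
    rw [hFCcard, hFcard] at hsplit
    have heq : F.filter (fun w => ¬ w ∈ C)
        = Cᶜ.filter (fun w => Γ.Adj w u ∧ Γ.Adj w u') := by
      ext w
      simp only [hF, mem_filter, Set.mem_toFinset, SimpleGraph.mem_commonNeighbors,
        mem_compl, SimpleGraph.mem_neighborSet]
      constructor
      · rintro ⟨⟨ha, ha'⟩, hw⟩; exact ⟨hw, ha.symm, ha'.symm⟩
      · rintro ⟨hw, ha, ha'⟩; exact ⟨⟨ha.symm, ha'.symm⟩, hw⟩
    rw [heq] at hsplit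
    omega
  -- first moment
  have sum1 : ∑ w ∈ Cᶜ, X w = (s + 1) * (s * t) := by
    have : ∀ w, X w = ∑ u ∈ C, if Γ.Adj w u then 1 else 0 := fun w =>
      Finset.card_filter _ _
    calc ∑ w ∈ Cᶜ, X w = ∑ w ∈ Cᶜ, ∑ u ∈ C, if Γ.Adj w u then 1 else 0 :=
          Finset.sum_congr rfl fun w _ => this w
      _ = ∑ u ∈ C, ∑ w ∈ Cᶜ, if Γ.Adj w u then 1 else 0 := Finset.sum_comm
      _ = ∑ u ∈ C, (Cᶜ.filter (fun w => Γ.Adj w u)).card :=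
          Finset.sum_congr rfl fun u _ => (Finset.card_filter _ _).symm
      _ = ∑ u ∈ C, s * t := Finset.sum_congr rfl fun u hu => h1 u hu
      _ = (s + 1) * (s * t) := by rw [Finset.sum_const, hCcard]; ring
  -- second moment
  have sum2 : ∑ w ∈ Cᶜ, X w * X w = (s + 1) * (s * t) * α := by
    have hXsq : ∀ w, X w * X w
        = ∑ u ∈ C, ∑ u' ∈ C, if Γ.Adj w u ∧ Γ.Adj w u' then 1 else 0 := by
      intro w
      rw [hX]
      simp only [Finset.card_filter]
      rw [Finset.sum_mul_sum]
      refine Finset.sum_congr rfl fun u _ => Finset.sum_congr rfl fun u' _ => ?_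
      split_ifs with h1' h2' h3' <;> simp_all
    calc ∑ w ∈ Cᶜ, X w * X w
        = ∑ w ∈ Cᶜ, ∑ u ∈ C, ∑ u' ∈ C, if Γ.Adj w u ∧ Γ.Adj w u' then 1 else 0 :=
          Finset.sum_congr rfl fun w _ => hXsq w
      _ = ∑ u ∈ C, ∑ w ∈ Cᶜ, ∑ u' ∈ C, if Γ.Adj w u ∧ Γ.Adj w u' then 1 else 0 :=
          Finset.sum_comm
      _ = ∑ u ∈ C, ∑ u' ∈ C, ∑ w ∈ Cᶜ, if Γ.Adj w u ∧ Γ.Adj w u' then 1 else 0 :=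
          Finset.sum_congr rfl fun u _ => Finset.sum_comm
      _ = ∑ u ∈ C, ∑ u' ∈ C, (Cᶜ.filter (fun w => Γ.Adj w u ∧ Γ.Adj w u')).card :=
          Finset.sum_congr rfl fun u _ => Finset.sum_congr rfl fun u' _ =>
            (Finset.card_filter _ _).symm
      _ = ∑ u ∈ C, (s * t + s * (t * (α - 1))) := by
          refine Finset.sum_congr rfl fun u hu => ?_
          rw [← Finset.add_sum_erase _ _ hu]
          have hdiag : Cᶜ.filter (fun w => Γ.Adj w u ∧ Γ.Adj w u)
              = Cᶜ.filter (fun w => Γ.Adj w u) := by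
            ext w; simp
          have hoff : ∑ u' ∈ C.erase u,
              (Cᶜ.filter (fun w => Γ.Adj w u ∧ Γ.Adj w u')).card = s * (t * (α - 1)) := by
            rw [Finset.sum_congr rfl (fun u' hu' => h2 u hu u' (Finset.mem_of_mem_erase hu')
              (Ne.symm (Finset.ne_of_mem_erase hu'))), Finset.sum_const,
              Finset.card_erase_of_mem hu, hCcard, smul_eq_mul]
            congr 1
          rw [hdiag, h1 u hu, hoff]
      _ = (s + 1) * (s * t) * α := by
          rw [Finset.sum_const, hCcard, smul_eq_mul]
          obtain ⟨m, rfl⟩ : ∃ m, α = m + 1 := ⟨α - 1, by omega⟩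
          simp only [Nat.add_sub_cancel]
          ring
  -- size of the outside
  have hsub : s + 1 ≤ Fintype.card V := by
    rw [← hCcard]; exact Finset.card_le_univ C
  have keyN : α * Cᶜ.card = (s + 1) * (s * t) := by
    have hcc : Cᶜ.card = Fintype.card V - (s + 1) := by
      rw [Finset.card_compl, hCcard]
    have e1 : α * Cᶜ.card + α * (s + 1) = α * Fintype.card V := by
      rw [← Nat.mul_add, hcc]
      congr 1
      omega
    have e2 : α * Fintype.card V = (s + 1) * (s * t) + α * (s + 1) := by
      rw [hcard]; ring
    omega
  -- the variance is zero
  have c1 : ∑ w ∈ Cᶜ, (X w : ℤ) = ((s + 1) * (s * t) : ℕ) := by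
    exact_mod_cast congrArg (Nat.cast : ℕ → ℤ) sum1
  have c2 : ∑ w ∈ Cᶜ, (X w : ℤ) * (X w : ℤ) = ((s + 1) * (s * t) * α : ℕ) := by
    exact_mod_cast congrArg (Nat.cast : ℕ → ℤ) sum2
  have ck : (α : ℤ) * (Cᶜ.card : ℤ) = ((s + 1) * (s * t) : ℕ) := by
    exact_mod_cast congrArg (Nat.cast : ℕ → ℤ) keyN
  have hvar : ∑ w ∈ Cᶜ, ((X w : ℤ) - α) ^ 2 = 0 := by
    have e1 : ∑ w ∈ Cᶜ, ((X w : ℤ) - α) ^ 2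
        = (∑ w ∈ Cᶜ, (X w : ℤ) * (X w : ℤ)) - 2 * α * (∑ w ∈ Cᶜ, (X w : ℤ))
          + (Cᶜ.card : ℤ) * α ^ 2 := by
      rw [Finset.mul_sum, ← Finset.sum_sub_distrib]
      rw [show ((Cᶜ.card : ℤ) * α ^ 2) = ∑ _w ∈ Cᶜ, (α : ℤ) ^ 2 by
        rw [Finset.sum_const, nsmul_eq_mul]]
      rw [← Finset.sum_add_distrib]
      exact Finset.sum_congr rfl fun w _ => by ring
    have hmul : (α : ℤ) * ∑ w ∈ Cᶜ, ((X w : ℤ) - α) ^ 2 = 0 := by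
      rw [e1, c1, c2]
      push_cast at ck ⊢
      linear_combination (α : ℤ) ^ 2 * ck
    have hαz : (α : ℤ) ≠ 0 := by exact_mod_cast hα.ne'
    rcases mul_eq_zero.1 hmul with h | h
    · exact absurd h hαz
    · exact h
  have hvmem : v ∈ Cᶜ := Finset.mem_compl.2 hv
  have hterm : ((X v : ℤ) - α) ^ 2 = 0 :=
    (Finset.sum_eq_zero_iff_of_nonneg (fun w _ => sq_nonneg _)).1 hvar v hvmem
  have hXv : X v = α := by
    have h' : (X v : ℤ) = α :=
      sub_eq_zero.1 ((pow_eq_zero_iff (n := 2) (by norm_num)).mp hterm)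
    exact_mod_cast h'
  have hset : {u : V | u ∈ C ∧ Γ.Adj v u} = ↑(C.filter (fun u => Γ.Adj v u)) := by
    ext u; simp
  rw [hset, Set.ncard_coe_finset]
  exact hXv
end

section
/- Let Γ be a simple graph that is strongly regular with parameters (275,112,30,56). Then every clique of Γ of size at least 3 is contained in at most one 5-clique of Γ. In particular, every 3-clique and every 4-clique of Γ is contained in at most one 5-clique. -/
open Finset

section Aux

variable {V : Type*} [Fintype V] [DecidableEq V] (Γ : SimpleGraph V) [DecidableRel Γ.Adj]

/-- Split a cardinality of a filter over `univ` into the parts inside and outside `C`. -/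
private lemma filter_split (C : Finset V) (p : V → Prop) [DecidablePred p] :
    ({x ∈ C | p x}).card + ({x ∈ Cᶜ | p x}).card = ({x ∈ (univ : Finset V) | p x}).card := by
  rw [← card_union_of_disjoint (disjoint_filter_filter disjoint_compl_right),
    ← filter_union, union_compl]

/-- In an SRG(275,112,30,56), any vertex outside a 5-clique has at most 2 neighbours
inside the clique.  (In fact exactly 2, by a second-moment count.) -/
private lemma srg_275_outside_five_clique
    (hΓ : Γ.IsSRGWith 275 112 30 56)
    (C : Finset V) (hC : Γ.IsNClique 5 C) (y : V) (hy : y ∉ C) :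
    ({u ∈ C | Γ.Adj u y}).card ≤ 2 := by
  set d : V → ℕ := fun v => ({u ∈ C | Γ.Adj u v}).card with hd
  have hcard5 : C.card = 5 := hC.2
  have hadjC : ∀ u ∈ C, ∀ w ∈ C, u ≠ w → Γ.Adj u w := fun u hu w hw hne =>
    hC.1 hu hw hne
  -- each vertex of C has exactly 4 neighbours inside C
  have hNC : ∀ u ∈ C, ({w ∈ C | Γ.Adj u w}).card = 4 := by
    intro u hu
    have : {w ∈ C | Γ.Adj u w} = C.erase u := by
      ext w
      simp only [mem_filter, mem_erase]
      constructor
      · rintro ⟨hw, hadj⟩; exact ⟨(Γ.ne_of_adj hadj).symm, hw⟩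
      · rintro ⟨hne, hw⟩; exact ⟨hw, hadjC u hu w hw (Ne.symm hne)⟩
    rw [this, card_erase_of_mem hu, hcard5]
  -- each vertex of C has exactly 108 neighbours outside C
  have hNout : ∀ u ∈ C, ({v ∈ Cᶜ | Γ.Adj u v}).card = 108 := by
    intro u hu
    have htot : ({v ∈ (univ : Finset V) | Γ.Adj u v}).card = 112 := by
      have : {v ∈ (univ : Finset V) | Γ.Adj u v} = Γ.neighborFinset u := by
        ext v; simp [SimpleGraph.mem_neighborFinset]
      rw [this]
      exact hΓ.regular u
    have hsplit := filter_split C (fun v => Γ.Adj u v)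
    have hin : ({v ∈ C | Γ.Adj u v}).card = 4 := hNC u hu
    omega
  -- common neighbours of a pair of distinct vertices of C : 3 inside C, 27 outside
  have hpair : ∀ u ∈ C, ∀ w ∈ C, u ≠ w →
      ({v ∈ Cᶜ | Γ.Adj u v ∧ Γ.Adj w v}).card = 27 := by
    intro u hu w hw hne
    have hadj := hadjC u hu w hw hne
    have htot : ({v ∈ (univ : Finset V) | Γ.Adj u v ∧ Γ.Adj w v}).card = 30 := by
      have hcn := hΓ.of_adj u w hadj
      rw [← hcn, ← Set.toFinset_card]
      congr 1
      ext v
      simp [SimpleGraph.mem_commonNeighbors]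
    have hin : ({v ∈ C | Γ.Adj u v ∧ Γ.Adj w v}).card = 3 := by
      have : {v ∈ C | Γ.Adj u v ∧ Γ.Adj w v} = (C.erase u).erase w := by
        ext v
        simp only [mem_filter, mem_erase]
        constructor
        · rintro ⟨hv, h1, h2⟩
          exact ⟨(Γ.ne_of_adj h2).symm, (Γ.ne_of_adj h1).symm, hv⟩
        · rintro ⟨hvw, hvu, hv⟩
          exact ⟨hv, hadjC u hu v hv (Ne.symm hvu), hadjC w hw v hv (Ne.symm hvw)⟩
      rw [this, card_erase_of_mem, card_erase_of_mem hu, hcard5]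
      exact mem_erase.mpr ⟨hne.symm, hw⟩
    have hsplit := filter_split C (fun v => Γ.Adj u v ∧ Γ.Adj w v)
    omega
  -- first moment : ∑_{v ∉ C} d v = 540
  have sum1 : ∑ v ∈ Cᶜ, d v = 540 := by
    have step : ∑ v ∈ Cᶜ, d v = ∑ u ∈ C, ({v ∈ Cᶜ | Γ.Adj u v}).card := by
      simp only [hd, card_filter]
      exact Finset.sum_comm
    rw [step, Finset.sum_congr rfl hNout, Finset.sum_const, hcard5]; rfl
  -- second moment : ∑_{v ∉ C} d v * d v = 1080
  have sum2 : ∑ v ∈ Cᶜ, d v * d v = 1080 := by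
    have expand : ∀ v, d v * d v =
        ∑ u ∈ C, ∑ w ∈ C, if Γ.Adj u v ∧ Γ.Adj w v then 1 else 0 := by
      intro v
      rw [hd]
      simp only [card_filter]
      rw [Finset.sum_mul_sum]
      refine Finset.sum_congr rfl fun u _ => Finset.sum_congr rfl fun w _ => ?_
      by_cases h1 : Γ.Adj u v <;> by_cases h2 : Γ.Adj w v <;> simp [h1, h2]
    calc ∑ v ∈ Cᶜ, d v * d v
        = ∑ u ∈ C, ∑ w ∈ C, ({v ∈ Cᶜ | Γ.Adj u v ∧ Γ.Adj w v}).card := by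
          simp only [expand]
          rw [Finset.sum_comm]
          refine Finset.sum_congr rfl fun u _ => ?_
          rw [Finset.sum_comm]
          refine Finset.sum_congr rfl fun w _ => ?_
          rw [card_filter]
      _ = ∑ u ∈ C, ∑ w ∈ C, (if u = w then 108 else 27) := by
          refine Finset.sum_congr rfl fun u hu => Finset.sum_congr rfl fun w hw => ?_
          by_cases hne : u = w
          · subst hne
            simp only [if_pos rfl]
            rw [← hNout u hu]
            congr 1
            ext v; simp
          · rw [if_neg hne]
            exact hpair u hu w hw hne
      _ = 1080 := by
          have inner : ∀ u ∈ C, (∑ w ∈ C, if u = w then 108 else 27) = 216 := by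
            intro u hu
            have : ∀ w ∈ C, (if u = w then 108 else 27)
                = (if u = w then 81 else 0) + 27 := by
              intro w _
              by_cases h : u = w <;> simp [h]
            rw [Finset.sum_congr rfl this, Finset.sum_add_distrib,
              Finset.sum_ite_eq, if_pos hu, Finset.sum_const, hcard5]
            rfl
          rw [Finset.sum_congr rfl inner, Finset.sum_const, hcard5]; rfl
  -- |Cᶜ| = 270
  have hcompl : Cᶜ.card = 270 := by
    rw [card_compl, hcard5, hΓ.card]
  -- the variance-type sum vanishes : ∑ (d v - 1)(d v - 2) = 0 in ℤ
  have e1 : ∑ v ∈ Cᶜ, ((d v : ℤ) * (d v : ℤ)) = 1080 := by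
    have : ∑ v ∈ Cᶜ, ((d v : ℤ) * (d v : ℤ)) = ((∑ v ∈ Cᶜ, d v * d v : ℕ) : ℤ) := by
      push_cast; rfl
    rw [this, sum2]; rfl
  have e2 : ∑ v ∈ Cᶜ, ((d v : ℤ)) = 540 := by
    have : ∑ v ∈ Cᶜ, ((d v : ℤ)) = ((∑ v ∈ Cᶜ, d v : ℕ) : ℤ) := by push_cast; rfl
    rw [this, sum1]; rfl
  have hzero : ∑ v ∈ Cᶜ, ((d v : ℤ) - 1) * ((d v : ℤ) - 2) = 0 := by
    have expand : ∀ v ∈ Cᶜ, ((d v : ℤ) - 1) * ((d v : ℤ) - 2)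
        = (d v : ℤ) * (d v : ℤ) - 3 * (d v : ℤ) + 2 := by
      intro v _
      ring
    rw [Finset.sum_congr rfl expand, Finset.sum_add_distrib, Finset.sum_sub_distrib,
      e1, ← Finset.mul_sum, e2, Finset.sum_const, hcompl]
    norm_num
  have hnonneg : ∀ v ∈ Cᶜ, 0 ≤ ((d v : ℤ) - 1) * ((d v : ℤ) - 2) := by
    intro v _
    rcases le_or_gt (d v) 1 with h | h
    · have hc : (d v : ℤ) ≤ 1 := by exact_mod_cast h
      nlinarith
    · have hc : (2 : ℤ) ≤ (d v : ℤ) := by exact_mod_cast h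
      nlinarith
  have hy' : y ∈ Cᶜ := mem_compl.mpr hy
  have hterm : ((d y : ℤ) - 1) * ((d y : ℤ) - 2) = 0 :=
    (Finset.sum_eq_zero_iff_of_nonneg hnonneg).mp hzero y hy'
  have hdy : (d y : ℤ) ≤ 2 := by
    rcases mul_eq_zero.mp hterm with h | h <;> omega
  exact_mod_cast hdy

end Aux

/-- In a strongly regular graph with parameters (275,112,30,56), every clique of
size at least 3 is contained in at most one 5-clique. -/
theorem srg_275_clique_in_at_most_one_five_clique
    {V : Type*} [Fintype V] (Γ : SimpleGraph V) [DecidableRel Γ.Adj]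
    (hΓ : Γ.IsSRGWith 275 112 30 56)
    (A : Finset V) (hA : Γ.IsClique (A : Set V)) (hAcard : 3 ≤ A.card)
    (C₁ C₂ : Finset V) (hC₁ : Γ.IsNClique 5 C₁) (hC₂ : Γ.IsNClique 5 C₂)
    (hAC₁ : A ⊆ C₁) (hAC₂ : A ⊆ C₂) :
    C₁ = C₂ := by
  classical
  by_contra hne
  -- there is a vertex of C₂ outside C₁
  have hnsub : ¬ C₂ ⊆ C₁ := by
    intro hsub
    exact hne (Finset.eq_of_subset_of_card_le hsub (by rw [hC₁.2, hC₂.2])).symm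
  obtain ⟨y, hyC₂, hyC₁⟩ := Finset.not_subset.mp hnsub
  -- y is adjacent to every vertex of A, and A ⊆ C₁, so y has ≥ 3 neighbours in C₁
  have hsubset : A ⊆ {u ∈ C₁ | Γ.Adj u y} := by
    intro a ha
    refine Finset.mem_filter.mpr ⟨hAC₁ ha, ?_⟩
    have hay : a ≠ y := fun h => hyC₁ (h ▸ hAC₁ ha)
    exact hC₂.1 (hAC₂ ha) hyC₂ hay
  have h3 : 3 ≤ ({u ∈ C₁ | Γ.Adj u y}).card :=
    le_trans hAcard (Finset.card_le_card hsubset)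
  have h2 := srg_275_outside_five_clique Γ hΓ C₁ hC₁ y hyC₁
  omega
end

section
/- Let Γ be a simple graph that is strongly regular with parameters (275,112,30,56). Then Γ contains no clique of size 6; that is, every clique of Γ has at most 5 vertices. -/
open Finset

/-- A strongly regular graph with parameters (275,112,30,56) contains no clique of
size 6; that is, every clique has at most 5 vertices. -/
theorem srg_275_no_six_clique
    {V : Type*} [Fintype V] (Γ : SimpleGraph V) [DecidableRel Γ.Adj]
    (hΓ : Γ.IsSRGWith 275 112 30 56) :
    (¬ ∃ C : Finset V, Γ.IsNClique 6 C) ∧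
    (∀ A : Finset V, Γ.IsClique (A : Set V) → A.card ≤ 5) := by
  classical
  have key : ¬ ∃ C : Finset V, Γ.IsNClique 6 C := by
    rintro ⟨C, hC⟩
    obtain ⟨hCc, hC6⟩ := hC
    -- split counting over C and Cᶜ
    have hsplit : ∀ p : V → Prop, ∀ _ : DecidablePred p,
        #(C.filter p) + #(Cᶜ.filter p) = #(univ.filter p) := by
      intro p _
      rw [← Finset.card_union_of_disjoint
        (Finset.disjoint_filter_filter (disjoint_compl_right)),
        ← Finset.filter_union, Finset.union_compl]
    -- neighbors of a clique vertex inside C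
    have hin : ∀ c ∈ C, #(C.filter fun x => Γ.Adj c x) = 5 := by
      intro c hc
      have : C.filter (fun x => Γ.Adj c x) = C.erase c := by
        ext x
        simp only [Finset.mem_filter, Finset.mem_erase]
        constructor
        · rintro ⟨hx, hadj⟩
          exact ⟨fun h => Γ.irrefl (h ▸ hadj), hx⟩
        · rintro ⟨hne, hx⟩
          exact ⟨hx, hCc hc hx (Ne.symm hne)⟩
      rw [this, Finset.card_erase_of_mem hc, hC6]
    -- degrees
    have hdeg : ∀ c : V, #(univ.filter fun x => Γ.Adj c x) = 112 := by
      intro c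
      have := hΓ.regular c
      rwa [SimpleGraph.degree, SimpleGraph.neighborFinset, Set.toFinset_card,
        Fintype.card_subtype] at this
    -- neighbors of a clique vertex outside C
    have hout : ∀ c ∈ C, #(Cᶜ.filter fun x => Γ.Adj c x) = 107 := by
      intro c hc
      have h := hsplit (fun x => Γ.Adj c x) inferInstance
      rw [hin c hc, hdeg c] at h
      omega
    -- common neighbors of two distinct clique vertices
    have hcn : ∀ c ∈ C, ∀ c' ∈ C, c ≠ c' →
        #(univ.filter fun x => Γ.Adj c x ∧ Γ.Adj c' x) = 30 := by
      intro c hc c' hc' hne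
      have hadj : Γ.Adj c c' := hCc hc hc' hne
      have := hΓ.of_adj c c' hadj
      rw [← this, Fintype.card_subtype]
      apply congrArg
      ext x
      simp [SimpleGraph.mem_commonNeighbors]
    -- common neighbors inside C
    have hcnin : ∀ c ∈ C, ∀ c' ∈ C, c ≠ c' →
        #(C.filter fun x => Γ.Adj c x ∧ Γ.Adj c' x) = 4 := by
      intro c hc c' hc' hne
      have : C.filter (fun x => Γ.Adj c x ∧ Γ.Adj c' x) = (C.erase c).erase c' := by
        ext x
        simp only [Finset.mem_filter, Finset.mem_erase]
        constructor
        · rintro ⟨hx, h1, h2⟩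
          exact ⟨fun h => Γ.irrefl (h ▸ h2), fun h => Γ.irrefl (h ▸ h1), hx⟩
        · rintro ⟨hne2, hne1, hx⟩
          exact ⟨hx, hCc hc hx (Ne.symm hne1), hCc hc' hx (Ne.symm hne2)⟩
      rw [this, Finset.card_erase_of_mem, Finset.card_erase_of_mem hc, hC6]
      exact Finset.mem_erase.2 ⟨Ne.symm hne, hc'⟩
    -- common neighbors outside C
    have hcnout : ∀ c ∈ C, ∀ c' ∈ C, c ≠ c' →
        #(Cᶜ.filter fun x => Γ.Adj c x ∧ Γ.Adj c' x) = 26 := by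
      intro c hc c' hc' hne
      have h := hsplit (fun x => Γ.Adj c x ∧ Γ.Adj c' x) inferInstance
      rw [hcnin c hc c' hc' hne, hcn c hc c' hc' hne] at h
      omega
    -- the counting function
    set f : V → ℕ := fun x => #(C.filter fun c => Γ.Adj c x) with hf
    have hfsum : ∀ x : V, f x = ∑ c ∈ C, if Γ.Adj c x then 1 else 0 := by
      intro x
      show #(C.filter fun c => Γ.Adj c x) = _
      exact Finset.card_filter _ _
    -- first moment
    have hS1 : ∑ x ∈ Cᶜ, f x = 642 := by
      simp only [hfsum]
      rw [Finset.sum_comm]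
      have : ∀ c ∈ C, (∑ x ∈ Cᶜ, if Γ.Adj c x then 1 else 0) = 107 := by
        intro c hc
        rw [← Finset.card_filter]
        exact hout c hc
      rw [Finset.sum_congr rfl this, Finset.sum_const, hC6]
      norm_num
    -- second moment
    have hS2 : ∑ x ∈ Cᶜ, (f x) ^ 2 = 1422 := by
      have hsq : ∀ x : V, (f x) ^ 2 =
          ∑ c ∈ C, ∑ c' ∈ C, if Γ.Adj c x ∧ Γ.Adj c' x then 1 else 0 := by
        intro x
        rw [sq, hfsum, Finset.sum_mul_sum]
        refine Finset.sum_congr rfl fun c _ => Finset.sum_congr rfl fun c' _ => ?_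
        by_cases h1 : Γ.Adj c x <;> by_cases h2 : Γ.Adj c' x <;> simp [h1, h2]
      simp only [hsq]
      rw [Finset.sum_comm]
      have hinner : ∀ c ∈ C,
          (∑ x ∈ Cᶜ, ∑ c' ∈ C, if Γ.Adj c x ∧ Γ.Adj c' x then 1 else 0) = 237 := by
        intro c hc
        rw [Finset.sum_comm]
        have hterm : ∀ c' ∈ C,
            (∑ x ∈ Cᶜ, if Γ.Adj c x ∧ Γ.Adj c' x then 1 else 0)
              = if c' = c then 107 else 26 := by
          intro c' hc'
          rw [← Finset.card_filter]
          by_cases h : c' = c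
          · subst h
            simp only [if_pos rfl]
            rw [← hout c' hc]
            congr 1; ext x; simp [and_self]
          · rw [if_neg h]
            exact hcnout c hc c' hc' (Ne.symm h)
        rw [Finset.sum_congr rfl hterm,
          ← Finset.add_sum_erase C (fun c' => if c' = c then 107 else 26) hc,
          if_pos rfl,
          Finset.sum_congr rfl (fun x hx => if_neg (Finset.mem_erase.1 hx).1),
          Finset.sum_const, Finset.card_erase_of_mem hc, hC6]
        norm_num
      rw [Finset.sum_congr rfl hinner, Finset.sum_const, hC6]
      norm_num
    -- cardinality of the complement
    have hcardc : #(Cᶜ) = 269 := by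
      rw [Finset.card_compl, hΓ.card, hC6]
    -- Cauchy–Schwarz over ℚ
    have hCS := sq_sum_le_card_mul_sum_sq (s := Cᶜ) (f := fun x => (f x : ℚ))
    rw [← Nat.cast_sum, hS1, hcardc] at hCS
    have : (∑ x ∈ Cᶜ, ((f x : ℚ)) ^ 2) = 1422 := by
      exact_mod_cast congrArg (Nat.cast : ℕ → ℚ) hS2
    rw [this] at hCS
    norm_num at hCS
  refine ⟨key, fun A hA => ?_⟩
  by_contra h
  push_neg at h
  obtain ⟨B, hBA, hB6⟩ := Finset.exists_subset_card_eq h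
  exact key ⟨B, hA.subset (by exact_mod_cast hBA), hB6⟩
end

section
/- Let Γ be a simple graph that is strongly regular with parameters (275,112,30,56), and suppose that every 3-clique of Γ is contained in some 5-clique of Γ. Then every 3-clique of Γ is contained in exactly one 5-clique, and Γ has exactly 15400 cliques of size 5. -/
open Finset

private lemma double_count {α β : Type*} (s : Finset α) (t : Finset β) (r : α → β → Prop)
    [∀ a b, Decidable (r a b)] :
    ∑ a ∈ s, #(t.filter (r a)) = ∑ b ∈ t, #(s.filter (r · b)) := by
  simp_rw [Finset.card_filter]; exact Finset.sum_comm

private lemma card_cn {V : Type*} [Fintype V] (Γ : SimpleGraph V) [DecidableRel Γ.Adj]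
    (a b : V) :
    #(univ.filter fun c => Γ.Adj a c ∧ Γ.Adj b c) = Fintype.card (Γ.commonNeighbors a b) := by
  rw [← Set.toFinset_card]; congr 1; ext c; simp [SimpleGraph.mem_commonNeighbors]

private lemma key_lemma {V : Type*} [Fintype V] [DecidableEq V] (Γ : SimpleGraph V)
    [DecidableRel Γ.Adj] (hΓ : Γ.IsSRGWith 275 112 30 56)
    (C : Finset V) (hC : Γ.IsNClique 5 C) :
    ∀ v ∉ C, #(C.filter fun c => Γ.Adj v c) = 2 := by
  have hcard5 : #C = 5 := hC.card_eq
  have hclique := hC.isClique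
  -- outside degree of each clique vertex
  have hNC : ∀ c ∈ C, #(Cᶜ.filter fun v => Γ.Adj v c) = 108 := by
    intro c hc
    have h1 : Cᶜ.filter (fun v => Γ.Adj v c) = Γ.neighborFinset c \ C := by
      ext v
      simp only [Finset.mem_filter, Finset.mem_compl, Finset.mem_sdiff,
        SimpleGraph.mem_neighborFinset]
      rw [Γ.adj_comm]
      tauto
    have h2 : Γ.neighborFinset c ∩ C = C.erase c := by
      ext x
      simp only [Finset.mem_inter, SimpleGraph.mem_neighborFinset, Finset.mem_erase]
      constructor
      · rintro ⟨hadj, hx⟩; exact ⟨hadj.ne', hx⟩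
      · rintro ⟨hne, hx⟩
        exact ⟨hclique (Finset.mem_coe.mpr hc) (Finset.mem_coe.mpr hx) (Ne.symm hne), hx⟩
    have h3 := Finset.card_sdiff_add_card_inter (Γ.neighborFinset c) C
    rw [h2, Finset.card_erase_of_mem hc, hcard5] at h3
    have h4 : #(Γ.neighborFinset c) = 112 := hΓ.regular c
    rw [h1]
    omega
  -- pair counts
  have hNC2 : ∀ c ∈ C, ∀ c' ∈ C, c ≠ c' →
      #(Cᶜ.filter fun v => Γ.Adj v c ∧ Γ.Adj v c') = 27 := by
    intro c hc c' hc' hne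
    have hadj : Γ.Adj c c' := hclique (Finset.mem_coe.mpr hc) (Finset.mem_coe.mpr hc') hne
    have h1 : Cᶜ.filter (fun v => Γ.Adj v c ∧ Γ.Adj v c')
        = (univ.filter fun v => Γ.Adj c v ∧ Γ.Adj c' v) \ C := by
      ext v
      simp only [Finset.mem_filter, Finset.mem_compl, Finset.mem_sdiff, Finset.mem_univ,
        true_and]
      rw [Γ.adj_comm c v, Γ.adj_comm c' v]
      tauto
    have h2 : (univ.filter fun v => Γ.Adj c v ∧ Γ.Adj c' v) ∩ C = (C.erase c).erase c' := by
      ext x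
      simp only [Finset.mem_inter, Finset.mem_filter, Finset.mem_univ, true_and,
        Finset.mem_erase]
      constructor
      · rintro ⟨⟨h1', h2'⟩, hx⟩; exact ⟨h2'.ne', ⟨h1'.ne', hx⟩⟩
      · rintro ⟨hnec', hnec, hx⟩
        exact ⟨⟨hclique (Finset.mem_coe.mpr hc) (Finset.mem_coe.mpr hx) (Ne.symm hnec),
          hclique (Finset.mem_coe.mpr hc') (Finset.mem_coe.mpr hx) (Ne.symm hnec')⟩, hx⟩
    have h3 := Finset.card_sdiff_add_card_inter
      (univ.filter fun v => Γ.Adj c v ∧ Γ.Adj c' v) C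
    have h4 : #(univ.filter fun v => Γ.Adj c v ∧ Γ.Adj c' v) = 30 := by
      rw [card_cn]; exact hΓ.of_adj c c' hadj
    have h5 : #((C.erase c).erase c') = 3 := by
      rw [Finset.card_erase_of_mem (Finset.mem_erase.mpr ⟨Ne.symm hne, hc'⟩),
        Finset.card_erase_of_mem hc, hcard5]
    rw [h2, h5, h4] at h3
    rw [h1]
    omega
  have hccard : #(Cᶜ) = 270 := by
    rw [Finset.card_compl, hcard5, hΓ.card]
  -- first moment
  have sum1 : ∑ v ∈ Cᶜ, #(C.filter fun c => Γ.Adj v c) = 540 := by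
    rw [double_count]
    rw [Finset.sum_congr rfl hNC, Finset.sum_const, hcard5]
    norm_num
  -- second moment
  have expand : ∀ v, #(C.filter fun c => Γ.Adj v c) ^ 2
      = ∑ c ∈ C, ∑ c' ∈ C, if Γ.Adj v c ∧ Γ.Adj v c' then 1 else 0 := by
    intro v
    rw [sq, Finset.card_filter, Finset.sum_mul_sum]
    refine Finset.sum_congr rfl fun c _ => Finset.sum_congr rfl fun c' _ => ?_
    by_cases h1 : Γ.Adj v c <;> by_cases h2 : Γ.Adj v c' <;> simp [h1, h2]
  have sum2 : ∑ v ∈ Cᶜ, #(C.filter fun c => Γ.Adj v c) ^ 2 = 1080 := by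
    calc ∑ v ∈ Cᶜ, #(C.filter fun c => Γ.Adj v c) ^ 2
        = ∑ v ∈ Cᶜ, ∑ c ∈ C, ∑ c' ∈ C, if Γ.Adj v c ∧ Γ.Adj v c' then 1 else 0 :=
          Finset.sum_congr rfl fun v _ => expand v
      _ = ∑ c ∈ C, ∑ c' ∈ C, ∑ v ∈ Cᶜ, if Γ.Adj v c ∧ Γ.Adj v c' then 1 else 0 := by
          rw [Finset.sum_comm]
          exact Finset.sum_congr rfl fun c _ => Finset.sum_comm
      _ = ∑ c ∈ C, ∑ c' ∈ C, #(Cᶜ.filter fun v => Γ.Adj v c ∧ Γ.Adj v c') := by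
          simp_rw [Finset.card_filter]
      _ = ∑ c ∈ C, 216 := by
          refine Finset.sum_congr rfl fun c hc => ?_
          rw [← Finset.sum_erase_add _ _ hc]
          have he : ∑ c' ∈ C.erase c, #(Cᶜ.filter fun v => Γ.Adj v c ∧ Γ.Adj v c') = 108 := by
            rw [Finset.sum_congr rfl (fun c' hc' =>
              hNC2 c hc c' (Finset.mem_of_mem_erase hc')
                (Ne.symm (Finset.ne_of_mem_erase hc')))]
            rw [Finset.sum_const, Finset.card_erase_of_mem hc, hcard5]
            norm_num
          have hd : #(Cᶜ.filter fun v => Γ.Adj v c ∧ Γ.Adj v c) = 108 := by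
            simp only [and_self]
            exact hNC c hc
          omega
      _ = 1080 := by rw [Finset.sum_const, hcard5]; norm_num
  -- Cauchy–Schwarz equality argument
  have i1 : ∑ v ∈ Cᶜ, (#(C.filter fun c => Γ.Adj v c) : ℤ) = 540 := by
    have := congrArg (Nat.cast (R := ℤ)) sum1
    push_cast at this
    exact this
  have i2 : ∑ v ∈ Cᶜ, (#(C.filter fun c => Γ.Adj v c) : ℤ) ^ 2 = 1080 := by
    have := congrArg (Nat.cast (R := ℤ)) sum2
    push_cast at this
    exact this
  have hzero : ∑ v ∈ Cᶜ, ((#(C.filter fun c => Γ.Adj v c) : ℤ) - 2) ^ 2 = 0 := by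
    have hx : ∀ v ∈ Cᶜ, ((#(C.filter fun c => Γ.Adj v c) : ℤ) - 2) ^ 2
        = (#(C.filter fun c => Γ.Adj v c) : ℤ) ^ 2
          - 4 * (#(C.filter fun c => Γ.Adj v c) : ℤ) + 4 := fun v _ => by ring
    rw [Finset.sum_congr rfl hx, Finset.sum_add_distrib, Finset.sum_sub_distrib,
      ← Finset.mul_sum, i1, i2, Finset.sum_const, hccard]
    norm_num
  intro v hv
  have := (Finset.sum_eq_zero_iff_of_nonneg (fun w _ => sq_nonneg _)).1 hzero v
    (Finset.mem_compl.mpr hv)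
  have h2 : (#(C.filter fun c => Γ.Adj v c) : ℤ) = 2 := by
    have := pow_eq_zero_iff (n := 2) (by norm_num) |>.1 this
    linarith
  exact_mod_cast h2


section Helpers
variable {V : Type*} [Fintype V] [DecidableEq V] (Γ : SimpleGraph V) [DecidableRel Γ.Adj]

private lemma pair_clique {v w : V} (h : Γ.Adj v w) : Γ.IsNClique 2 {v, w} := by
  have h1 : Γ.IsNClique 1 {w} := SimpleGraph.isNClique_one.mpr ⟨w, rfl⟩
  simpa using h1.insert (fun b hb => by simp at hb; subst hb; exact h)

private lemma card_cn' (a b : V) :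
    #(univ.filter fun c => Γ.Adj a c ∧ Γ.Adj b c) = Fintype.card (Γ.commonNeighbors a b) := by
  rw [← Set.toFinset_card]; congr 1; ext c; simp [SimpleGraph.mem_commonNeighbors]

-- fiber 1 : edges through a vertex
private lemma fiber1 (hΓ : Γ.IsSRGWith 275 112 30 56) (v : V) :
    #((Γ.cliqueFinset 2).filter fun e => v ∈ e) = 112 := by
  have himg : (Γ.cliqueFinset 2).filter (fun e => v ∈ e)
      = (Γ.neighborFinset v).image (fun w => {v, w}) := by
    ext e
    simp only [Finset.mem_filter, Finset.mem_image, SimpleGraph.mem_neighborFinset,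
      SimpleGraph.mem_cliqueFinset_iff]
    constructor
    · rintro ⟨he, hv⟩
      obtain ⟨x, y, hxy, rfl⟩ := Finset.card_eq_two.1 he.card_eq
      have hadj : Γ.Adj x y := he.isClique (by simp) (by simp) hxy
      rcases Finset.mem_insert.1 hv with h | h
      · exact ⟨y, h ▸ hadj, by rw [h]⟩
      · have h : v = y := by simpa using h
        exact ⟨x, h ▸ hadj.symm, by rw [h, Finset.pair_comm]⟩
    · rintro ⟨w, hw, rfl⟩
      exact ⟨pair_clique Γ hw, Finset.mem_insert_self _ _⟩
  rw [himg, Finset.card_image_of_injOn, ← SimpleGraph.degree, hΓ.regular v]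
  intro w hw w' hw' hww
  have hw2 : Γ.Adj v w := by
    have := Finset.mem_coe.1 hw; rwa [SimpleGraph.mem_neighborFinset] at this
  simp only at hww
  have hmem : w ∈ ({v, w'} : Finset V) := by
    rw [← hww]; simp
  rcases Finset.mem_insert.1 hmem with h | h
  · exact absurd h hw2.ne'
  · simpa using h


-- fiber 2 : triangles through an edge
private lemma fiber2 (hΓ : Γ.IsSRGWith 275 112 30 56) {e : Finset V}
    (he : e ∈ Γ.cliqueFinset 2) :
    #((Γ.cliqueFinset 3).filter fun T => e ⊆ T) = 30 := by
  rw [SimpleGraph.mem_cliqueFinset_iff] at he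
  obtain ⟨a, b, hab, rfl⟩ := Finset.card_eq_two.1 he.card_eq
  have hadj : Γ.Adj a b := he.isClique (by simp) (by simp) hab
  have himg : (Γ.cliqueFinset 3).filter (fun T => ({a, b} : Finset V) ⊆ T)
      = (univ.filter fun c => Γ.Adj a c ∧ Γ.Adj b c).image
        (fun c => insert c {a, b}) := by
    ext T
    simp only [Finset.mem_filter, Finset.mem_image, Finset.mem_univ, true_and,
      SimpleGraph.mem_cliqueFinset_iff]
    constructor
    · rintro ⟨hT, heT⟩
      have hcards : #(T \ ({a, b} : Finset V)) = 1 := by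
        rw [Finset.card_sdiff_of_subset heT, hT.card_eq, he.card_eq]
      obtain ⟨c, hc⟩ := Finset.card_eq_one.1 hcards
      have hcT : c ∈ T ∧ c ∉ ({a, b} : Finset V) := by
        have : c ∈ T \ ({a, b} : Finset V) := hc ▸ Finset.mem_singleton_self c
        exact Finset.mem_sdiff.1 this
      have hTeq : T = insert c {a, b} := by
        apply (Finset.eq_of_subset_of_card_le _ _).symm
        · exact Finset.insert_subset hcT.1 heT
        · rw [hT.card_eq, Finset.card_insert_of_notMem hcT.2, he.card_eq]
      refine ⟨c, ⟨?_, ?_⟩, hTeq.symm⟩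
      · exact hT.isClique (Finset.mem_coe.mpr (heT (by simp))) (Finset.mem_coe.mpr hcT.1)
          (fun h => hcT.2 (by simp [← h]))
      · exact hT.isClique (Finset.mem_coe.mpr (heT (by simp))) (Finset.mem_coe.mpr hcT.1)
          (fun h => hcT.2 (by simp [← h]))
    · rintro ⟨c, ⟨hca, hcb⟩, rfl⟩
      constructor
      · have : Γ.IsNClique 3 {c, a, b} := by
          rw [SimpleGraph.is3Clique_triple_iff]
          exact ⟨hca.symm, hcb.symm, hadj⟩
        simpa using this
      · exact Finset.subset_insert _ _
  rw [himg, Finset.card_image_of_injOn, card_cn', hΓ.of_adj a b hadj]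
  intro c hc c' hc' hcc
  simp only [Finset.coe_filter, Set.mem_setOf_eq, Finset.mem_univ, true_and] at hc hc'
  simp only at hcc
  have hce : c ∉ ({a, b} : Finset V) := by
    simp only [Finset.mem_insert, Finset.mem_singleton]
    push_neg
    exact ⟨hc.1.ne', hc.2.ne'⟩
  have hmem : c ∈ insert c' ({a, b} : Finset V) := by
    rw [← hcc]; exact Finset.mem_insert_self _ _
  rcases Finset.mem_insert.1 hmem with h | h
  · exact h
  · exact absurd h hce

-- fiber 3 : k-subcliques of an n-clique
private lemma fiber3 {n k : ℕ} {C : Finset V} (hC : Γ.IsNClique n C) :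
    #((Γ.cliqueFinset k).filter fun T => T ⊆ C) = n.choose k := by
  have himg : (Γ.cliqueFinset k).filter (fun T => T ⊆ C) = C.powersetCard k := by
    ext T
    simp only [Finset.mem_filter, SimpleGraph.mem_cliqueFinset_iff, Finset.mem_powersetCard]
    constructor
    · rintro ⟨hT, hTC⟩; exact ⟨hTC, hT.card_eq⟩
    · rintro ⟨hTC, hcard⟩
      exact ⟨⟨hC.isClique.subset (Finset.coe_subset.mpr hTC), hcard⟩, hTC⟩
  rw [himg, Finset.card_powersetCard, hC.card_eq]

end Helpers

set_option maxHeartbeats 1000000 in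
/-- Let Γ be a strongly regular graph with parameters (275,112,30,56) in which
every 3-clique is contained in some 5-clique.  Then every 3-clique is contained in
exactly one 5-clique, and Γ has exactly 15400 cliques of size 5. -/
theorem srg_275_three_cliques_unique_ext_and_15400_five_cliques
    {V : Type*} [Fintype V] (Γ : SimpleGraph V) [DecidableRel Γ.Adj]
    (hΓ : Γ.IsSRGWith 275 112 30 56)
    (hext : ∀ T : Finset V, Γ.IsNClique 3 T → ∃ C : Finset V, Γ.IsNClique 5 C ∧ T ⊆ C) :
    (∀ T : Finset V, Γ.IsNClique 3 T → ∃! C : Finset V, Γ.IsNClique 5 C ∧ T ⊆ C) ∧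
    {C : Finset V | Γ.IsNClique 5 C}.ncard = 15400 := by
  classical
  -- uniqueness of extension
  have uniq : ∀ T : Finset V, Γ.IsNClique 3 T → ∃! C : Finset V, Γ.IsNClique 5 C ∧ T ⊆ C := by
    intro T hT
    obtain ⟨C, hC, hTC⟩ := hext T hT
    refine ⟨C, ⟨hC, hTC⟩, ?_⟩
    rintro C' ⟨hC', hTC'⟩
    by_contra hne
    have hnot : ¬ C' ⊆ C := fun hsub =>
      hne (Finset.eq_of_subset_of_card_le hsub (by rw [hC.card_eq, hC'.card_eq]))
    obtain ⟨v, hvC', hvC⟩ := Finset.not_subset.1 hnot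
    have hsub : T ⊆ C.filter fun c => Γ.Adj v c := by
      intro t ht
      refine Finset.mem_filter.2 ⟨hTC ht, ?_⟩
      exact hC'.isClique (Finset.mem_coe.mpr hvC') (Finset.mem_coe.mpr (hTC' ht))
        (fun h => hvC (h ▸ hTC ht))
    have h3 : 3 ≤ #(C.filter fun c => Γ.Adj v c) := by
      rw [← hT.card_eq]; exact Finset.card_le_card hsub
    rw [key_lemma Γ hΓ C hC v hvC] at h3
    omega
  refine ⟨uniq, ?_⟩
  -- counting
  have fiber5 : ∀ T ∈ Γ.cliqueFinset 3,
      #((Γ.cliqueFinset 5).filter fun C => T ⊆ C) = 1 := by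
    intro T hT
    rw [SimpleGraph.mem_cliqueFinset_iff] at hT
    obtain ⟨C, hC, hCuniq⟩ := uniq T hT
    rw [Finset.card_eq_one]
    refine ⟨C, ?_⟩
    ext C'
    simp only [Finset.mem_filter, SimpleGraph.mem_cliqueFinset_iff, Finset.mem_singleton]
    constructor
    · rintro ⟨h1, h2⟩; exact hCuniq C' ⟨h1, h2⟩
    · rintro rfl; exact ⟨hC.1, hC.2⟩
  -- double counts
  have E1 : 2 * #(Γ.cliqueFinset 2) = 275 * 112 := by
    have hdc := double_count (Γ.cliqueFinset 2) (univ : Finset V) (fun e v => v ∈ e)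
    have hLHS : ∑ e ∈ Γ.cliqueFinset 2, #(univ.filter fun v => v ∈ e)
        = 2 * #(Γ.cliqueFinset 2) := by
      rw [Finset.sum_congr rfl (fun e he => ?_), Finset.sum_const]
      · rw [smul_eq_mul, mul_comm]
      · have : (univ.filter fun v => v ∈ e) = e := by ext v; simp
        rw [this, (SimpleGraph.mem_cliqueFinset_iff.1 he).card_eq]
    have hRHS : ∑ v ∈ (univ : Finset V), #((Γ.cliqueFinset 2).filter fun e => v ∈ e)
        = 275 * 112 := by
      rw [Finset.sum_congr rfl (fun v _ => fiber1 Γ hΓ v), Finset.sum_const,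
        Finset.card_univ, hΓ.card, smul_eq_mul]
    rw [← hLHS, hdc, hRHS]
  have E2 : 30 * #(Γ.cliqueFinset 2) = 3 * #(Γ.cliqueFinset 3) := by
    have hdc := double_count (Γ.cliqueFinset 2) (Γ.cliqueFinset 3)
      (fun e T => e ⊆ T)
    have hLHS : ∑ e ∈ Γ.cliqueFinset 2, #((Γ.cliqueFinset 3).filter fun T => e ⊆ T)
        = 30 * #(Γ.cliqueFinset 2) := by
      rw [Finset.sum_congr rfl (fun e he => fiber2 Γ hΓ he), Finset.sum_const,
        smul_eq_mul, mul_comm]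
    have hRHS : ∑ T ∈ Γ.cliqueFinset 3, #((Γ.cliqueFinset 2).filter fun e => e ⊆ T)
        = 3 * #(Γ.cliqueFinset 3) := by
      rw [Finset.sum_congr rfl
        (fun T hT => fiber3 Γ (SimpleGraph.mem_cliqueFinset_iff.1 hT)),
        Finset.sum_const, smul_eq_mul, show Nat.choose 3 2 = 3 from rfl, mul_comm]
    rw [← hLHS, hdc, hRHS]
  have E3 : #(Γ.cliqueFinset 3) = 10 * #(Γ.cliqueFinset 5) := by
    have hdc := double_count (Γ.cliqueFinset 3) (Γ.cliqueFinset 5)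
      (fun T C => T ⊆ C)
    have hLHS : ∑ T ∈ Γ.cliqueFinset 3, #((Γ.cliqueFinset 5).filter fun C => T ⊆ C)
        = #(Γ.cliqueFinset 3) := by
      rw [Finset.sum_congr rfl fiber5, Finset.sum_const, smul_eq_mul, mul_one]
    have hRHS : ∑ C ∈ Γ.cliqueFinset 5, #((Γ.cliqueFinset 3).filter fun T => T ⊆ C)
        = 10 * #(Γ.cliqueFinset 5) := by
      rw [Finset.sum_congr rfl
        (fun C hC => fiber3 Γ (SimpleGraph.mem_cliqueFinset_iff.1 hC)),
        Finset.sum_const, smul_eq_mul, show Nat.choose 5 3 = 10 from rfl, mul_comm]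
    rw [← hLHS, hdc, hRHS]
  have hset : {C : Finset V | Γ.IsNClique 5 C} = ↑(Γ.cliqueFinset 5) := by
    ext C; simp [SimpleGraph.mem_cliqueFinset_iff]
  rw [hset, Set.ncard_coe_finset]
  omega
end

section
/- Let Γ be a simple graph that is strongly regular with parameters (275,112,30,56), let p1 and p2 be distinct non-adjacent vertices of Γ, and let B be a bundle through p1. Then every member of B contains exactly 2 common neighbours of p1 and p2, and every common neighbour of p1 and p2 lies in exactly one member of B; consequently the sets C ∩ N(p1) ∩ N(p2), for C ranging over B, partition the 56 common neighbours of p1 and p2 into 28 pairs. -/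
open Finset

section Aux

variable {V : Type*} [Fintype V] [DecidableEq V] (Γ : SimpleGraph V) [DecidableRel Γ.Adj]

/-- The λ-count as a filter card. -/
lemma srg_common_card (hΓ : Γ.IsSRGWith 275 112 30 56) {x y : V} (h : Γ.Adj x y) :
    (Finset.univ.filter fun u => Γ.Adj x u ∧ Γ.Adj y u).card = 30 := by
  have h2 := hΓ.of_adj x y h
  rw [← Set.toFinset_card] at h2
  rw [← h2]
  congr 1
  ext u
  simp [SimpleGraph.mem_commonNeighbors]

/-- Any 5-clique through `p₁` contains exactly two neighbours of any vertex `q` that is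
distinct from and non-adjacent to `p₁`, in an SRG(275,112,30,56). -/
lemma srg_clique_two_neighbours (hΓ : Γ.IsSRGWith 275 112 30 56)
    (p₁ : V) (C : Finset V) (hC : Γ.IsNClique 5 C) (hpC : p₁ ∈ C)
    (q : V) (hq1 : q ≠ p₁) (hq2 : ¬ Γ.Adj p₁ q) :
    ((C.erase p₁).filter fun u => Γ.Adj q u).card = 2 := by
  classical
  set D : Finset V := C.erase p₁ with hDdef
  have hD4 : D.card = 4 := by
    rw [hDdef, Finset.card_erase_of_mem hpC, hC.2]
  have hDC : D ⊆ C := Finset.erase_subset _ _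
  have hDp : ∀ x ∈ D, Γ.Adj p₁ x := by
    intro x hx
    exact hC.1 hpC (hDC hx) (Finset.ne_of_mem_erase hx).symm
  have hDD : ∀ x ∈ D, ∀ y ∈ D, x ≠ y → Γ.Adj x y := by
    intro x hx y hy hxy
    exact hC.1 (hDC hx) (hDC hy) hxy
  -- the set of vertices distinct from and non-adjacent to p₁
  set R : Finset V := Finset.univ.filter (fun u => ¬ Γ.Adj p₁ u ∧ u ≠ p₁) with hRdef
  have hqR : q ∈ R := by
    simp [hRdef, hq1, hq2]
  -- |R| = 162
  have hRcard : R.card = 162 := by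
    have h1 : R = (insert p₁ (Γ.neighborFinset p₁))ᶜ := by
      ext u
      simp [hRdef, not_or, and_comm, eq_comm]
    have h2 : (insert p₁ (Γ.neighborFinset p₁)).card = 113 := by
      rw [Finset.card_insert_of_notMem (by simp), Γ.card_neighborFinset_eq_degree,
        hΓ.regular p₁]
    rw [h1, Finset.card_compl, h2, hΓ.card]
  -- m r = number of neighbours of r in D
  set m : V → ℕ := fun r => ((D.filter fun u => Γ.Adj r u).card) with hmdef
  -- First count: ∑ r in R, m r = 324
  have hsum1 : ∑ r ∈ R, m r = 324 := by
    have hswap : ∑ r ∈ R, m r = ∑ x ∈ D, (R.filter fun r => Γ.Adj r x).card := by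
      simp only [hmdef, Finset.card_filter]
      rw [Finset.sum_comm]
    rw [hswap]
    have hx81 : ∀ x ∈ D, (R.filter fun r => Γ.Adj r x).card = 81 := by
      intro x hx
      have hpx : Γ.Adj p₁ x := hDp x hx
      have heq : R.filter (fun r => Γ.Adj r x) =
          Γ.neighborFinset x \ insert p₁ (Γ.neighborFinset p₁) := by
        ext u
        simp only [hRdef, Finset.mem_filter, Finset.mem_univ, true_and, Finset.mem_sdiff,
          Finset.mem_insert, SimpleGraph.mem_neighborFinset, not_or]
        constructor
        · rintro ⟨⟨hnp, hne⟩, hadj⟩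
          exact ⟨hadj.symm, hne, hnp⟩
        · rintro ⟨hadj, hne, hnp⟩
          exact ⟨⟨hnp, hne⟩, hadj.symm⟩
      have hinter : Γ.neighborFinset x ∩ insert p₁ (Γ.neighborFinset p₁) =
          insert p₁ (Γ.neighborFinset x ∩ Γ.neighborFinset p₁) := by
        ext u
        simp only [Finset.mem_inter, Finset.mem_insert, SimpleGraph.mem_neighborFinset]
        constructor
        · rintro ⟨h1, h2 | h2⟩
          · exact Or.inl h2
          · exact Or.inr ⟨h1, h2⟩
        · rintro (rfl | ⟨h1, h2⟩)
          · exact ⟨hpx.symm, Or.inl rfl⟩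
          · exact ⟨h1, Or.inr h2⟩
      have hintcard : (Γ.neighborFinset x ∩ insert p₁ (Γ.neighborFinset p₁)).card = 31 := by
        rw [hinter, Finset.card_insert_of_notMem (by simp)]
        have : Γ.neighborFinset x ∩ Γ.neighborFinset p₁ =
            Finset.univ.filter fun u => Γ.Adj x u ∧ Γ.Adj p₁ u := by
          ext u; simp
        rw [this, srg_common_card Γ hΓ hpx.symm]
      have hkey := Finset.card_sdiff_add_card_inter (Γ.neighborFinset x)
        (insert p₁ (Γ.neighborFinset p₁))
      rw [hintcard, Γ.card_neighborFinset_eq_degree, hΓ.regular x] at hkey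
      rw [heq]
      omega
    rw [Finset.sum_congr rfl hx81, Finset.sum_const, hD4, smul_eq_mul]
  -- Second count: ∑ r in R, m r * (m r - 1) ≤ 324
  have hsum2 : ∑ r ∈ R, m r * (m r - 1) ≤ 324 := by
    have hoff : ∀ r : V, m r * (m r - 1) =
        (D.offDiag.filter fun z => Γ.Adj r z.1 ∧ Γ.Adj r z.2).card := by
      intro r
      have h1 : (D.filter fun u => Γ.Adj r u).offDiag =
          D.offDiag.filter fun z => Γ.Adj r z.1 ∧ Γ.Adj r z.2 := by
        ext ⟨a, b⟩
        simp only [Finset.mem_offDiag, Finset.mem_filter]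
        tauto
      rw [← h1, Finset.offDiag_card]
      simp only [hmdef]
      have hmm : ∀ c : ℕ, c * (c - 1) = c * c - c := by
        intro c
        cases c with
        | zero => rfl
        | succ n => rw [Nat.succ_sub_one, Nat.mul_succ, Nat.add_sub_cancel]
      exact hmm _
    have hswap : ∑ r ∈ R, m r * (m r - 1) =
        ∑ z ∈ D.offDiag, (R.filter fun r => Γ.Adj r z.1 ∧ Γ.Adj r z.2).card := by
      simp only [hoff, Finset.card_filter]
      rw [Finset.sum_comm]
    rw [hswap]
    have hbound : ∀ z ∈ D.offDiag,
        (R.filter fun r => Γ.Adj r z.1 ∧ Γ.Adj r z.2).card ≤ 27 := by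
      rintro ⟨x, y⟩ hz
      rw [Finset.mem_offDiag] at hz
      obtain ⟨hx, hy, hxy⟩ := hz
      have hxyadj : Γ.Adj x y := hDD x hx y hy hxy
      -- the other two vertices of D
      have hE : ((D.erase x).erase y).card = 2 := by
        rw [Finset.card_erase_of_mem (Finset.mem_erase.mpr ⟨Ne.symm hxy, hy⟩),
          Finset.card_erase_of_mem hx, hD4]
      obtain ⟨z₁, z₂, hz12, hEeq⟩ := Finset.card_eq_two.mp hE
      have hz₁mem : z₁ ∈ (D.erase x).erase y := by rw [hEeq]; simp
      have hz₂mem : z₂ ∈ (D.erase x).erase y := by rw [hEeq]; simp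
      have hz₁D : z₁ ∈ D := Finset.mem_of_mem_erase (Finset.mem_of_mem_erase hz₁mem)
      have hz₂D : z₂ ∈ D := Finset.mem_of_mem_erase (Finset.mem_of_mem_erase hz₂mem)
      have hz₁x : z₁ ≠ x := Finset.ne_of_mem_erase (Finset.mem_of_mem_erase hz₁mem)
      have hz₁y : z₁ ≠ y := Finset.ne_of_mem_erase hz₁mem
      have hz₂x : z₂ ≠ x := Finset.ne_of_mem_erase (Finset.mem_of_mem_erase hz₂mem)
      have hz₂y : z₂ ≠ y := Finset.ne_of_mem_erase hz₂mem
      set W : Finset V := Finset.univ.filter fun u => Γ.Adj x u ∧ Γ.Adj y u with hWdef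
      have hWcard : W.card = 30 := srg_common_card Γ hΓ hxyadj
      have hTsub : ({p₁, z₁, z₂} : Finset V) ⊆ W := by
        intro u hu
        simp only [Finset.mem_insert, Finset.mem_singleton] at hu
        rcases hu with rfl | rfl | rfl
        · simp only [hWdef, Finset.mem_filter, Finset.mem_univ, true_and]
          exact ⟨(hDp x hx).symm, (hDp y hy).symm⟩
        · simp only [hWdef, Finset.mem_filter, Finset.mem_univ, true_and]
          exact ⟨hDD x hx u hz₁D (Ne.symm hz₁x), hDD y hy u hz₁D (Ne.symm hz₁y)⟩
        · simp only [hWdef, Finset.mem_filter, Finset.mem_univ, true_and]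
          exact ⟨hDD x hx u hz₂D (Ne.symm hz₂x), hDD y hy u hz₂D (Ne.symm hz₂y)⟩
      have hTcard : ({p₁, z₁, z₂} : Finset V).card = 3 := by
        have hp₁z₁ : p₁ ≠ z₁ := fun h => (Finset.ne_of_mem_erase hz₁D) h.symm
        have hp₁z₂ : p₁ ≠ z₂ := fun h => (Finset.ne_of_mem_erase hz₂D) h.symm
        rw [Finset.card_insert_of_notMem (by simp [hp₁z₁, hp₁z₂]),
          Finset.card_insert_of_notMem (by simp [hz12]), Finset.card_singleton]
      have hsub : R.filter (fun r => Γ.Adj r x ∧ Γ.Adj r y) ⊆ W \ {p₁, z₁, z₂} := by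
        intro u hu
        simp only [hRdef, Finset.mem_filter, Finset.mem_univ, true_and] at hu
        obtain ⟨⟨hnp, hne⟩, hax, hay⟩ := hu
        have huz₁ : u ≠ z₁ := fun h => hnp (h ▸ hDp z₁ hz₁D)
        have huz₂ : u ≠ z₂ := fun h => hnp (h ▸ hDp z₂ hz₂D)
        simp only [Finset.mem_sdiff, hWdef, Finset.mem_filter, Finset.mem_univ, true_and,
          Finset.mem_insert, Finset.mem_singleton, not_or]
        exact ⟨⟨hax.symm, hay.symm⟩, hne, huz₁, huz₂⟩
      calc (R.filter fun r => Γ.Adj r x ∧ Γ.Adj r y).card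
          ≤ (W \ {p₁, z₁, z₂}).card := Finset.card_le_card hsub
        _ = W.card - ({p₁, z₁, z₂} : Finset V).card := Finset.card_sdiff_of_subset hTsub
        _ = 27 := by rw [hWcard, hTcard]
    calc ∑ z ∈ D.offDiag, (R.filter fun r => Γ.Adj r z.1 ∧ Γ.Adj r z.2).card
        ≤ ∑ _z ∈ D.offDiag, 27 := Finset.sum_le_sum hbound
      _ = 324 := by rw [Finset.sum_const, Finset.offDiag_card, hD4, smul_eq_mul]
  -- pointwise inequality 2*m ≤ m*(m-1) + 2
  have hpt : ∀ n : ℕ, 2 * n ≤ n * (n - 1) + 2 := by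
    intro n
    cases n with
    | zero => omega
    | succ k =>
      rw [Nat.succ_sub_one, Nat.succ_mul]
      have hkk : k ≤ k * k := by
        rcases Nat.eq_zero_or_pos k with rfl | hk
        · simp
        · exact Nat.le_mul_of_pos_left k hk
      linarith
  -- equality of sums forces pointwise equality
  have hsumeq : ∑ r ∈ R, 2 * m r = ∑ r ∈ R, (m r * (m r - 1) + 2) := by
    have h1 : ∑ r ∈ R, 2 * m r = 648 := by
      rw [← Finset.mul_sum, hsum1]
      norm_num
    have h2 : ∑ r ∈ R, (m r * (m r - 1) + 2) ≤ 648 := by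
      rw [Finset.sum_add_distrib, Finset.sum_const, hRcard, smul_eq_mul]
      omega
    have h3 : ∑ r ∈ R, 2 * m r ≤ ∑ r ∈ R, (m r * (m r - 1) + 2) :=
      Finset.sum_le_sum fun r _ => hpt (m r)
    omega
  have hpteq := (Finset.sum_eq_sum_iff_of_le fun r _ => hpt (m r)).mp hsumeq
  -- hence every m r ≤ 2
  have hle2 : ∀ r ∈ R, m r ≤ 2 := by
    intro r hr
    have h := hpteq r hr
    by_contra hgt
    push_neg at hgt
    obtain ⟨k, hk⟩ : ∃ k, m r = k + 3 := ⟨m r - 3, by omega⟩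
    rw [hk] at h
    have h3 : k + 3 - 1 = k + 2 := by omega
    rw [h3] at h
    nlinarith
  -- and the sum being 324 = 2 * 162 forces every m r = 2
  have hm2 : ∀ r ∈ R, m r = 2 := by
    have h2 : ∑ r ∈ R, m r = ∑ r ∈ R, 2 := by
      rw [hsum1, Finset.sum_const, hRcard, smul_eq_mul]
    exact fun r hr => (Finset.sum_eq_sum_iff_of_le hle2).mp h2 r hr
  exact hm2 q hqR

end Aux

/-- Let Γ be a strongly regular graph with parameters (275,112,30,56), let p₁ and
p₂ be distinct non-adjacent vertices, and let B be a bundle through p₁ (a set of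
28 5-cliques pairwise intersecting exactly in {p₁}).  Then every member of B
contains exactly 2 common neighbours of p₁ and p₂, every common neighbour of p₁
and p₂ lies in exactly one member of B, and hence the members of B partition the
56 common neighbours of p₁ and p₂ into 28 pairs. -/
theorem srg_275_bundle_partitions_common_neighbours
    {V : Type*} [Fintype V] [DecidableEq V] (Γ : SimpleGraph V) [DecidableRel Γ.Adj]
    (hΓ : Γ.IsSRGWith 275 112 30 56)
    (p₁ p₂ : V) (hne : p₁ ≠ p₂) (hnadj : ¬ Γ.Adj p₁ p₂)
    (B : Set (Finset V)) (hBcard : B.ncard = 28)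
    (hBmem : ∀ C ∈ B, Γ.IsNClique 5 C ∧ p₁ ∈ C)
    (hBint : ∀ C₁ ∈ B, ∀ C₂ ∈ B, C₁ ≠ C₂ → C₁ ∩ C₂ = {p₁}) :
    (∀ C ∈ B, {u : V | u ∈ C ∧ Γ.Adj p₁ u ∧ Γ.Adj p₂ u}.ncard = 2) ∧
    (∀ u : V, Γ.Adj p₁ u → Γ.Adj p₂ u → ∃! C, C ∈ B ∧ u ∈ C) ∧
    {u : V | Γ.Adj p₁ u ∧ Γ.Adj p₂ u}.ncard = 56 := by
  classical
  refine ⟨?_, ?_, ?_⟩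
  · -- each clique contains exactly 2 common neighbours
    intro C hCB
    obtain ⟨hC, hpC⟩ := hBmem C hCB
    have hset : {u : V | u ∈ C ∧ Γ.Adj p₁ u ∧ Γ.Adj p₂ u} =
        ↑((C.erase p₁).filter fun u => Γ.Adj p₂ u) := by
      ext u
      simp only [Set.mem_setOf_eq, Finset.coe_filter, Finset.mem_erase, Set.mem_setOf_eq]
      constructor
      · rintro ⟨huC, h1, h2⟩
        exact ⟨⟨h1.ne', huC⟩, h2⟩
      · rintro ⟨⟨hne', huC⟩, h2⟩
        exact ⟨huC, hC.1 hpC huC (Ne.symm hne'), h2⟩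
    rw [hset, Set.ncard_coe_finset]
    exact srg_clique_two_neighbours Γ hΓ p₁ C hC hpC p₂ (Ne.symm hne) hnadj
  · -- existence and uniqueness of the clique containing a common neighbour
    intro u h1 h2
    have hBfin : B.Finite := Set.toFinite B
    set Bf : Finset (Finset V) := hBfin.toFinset with hBfdef
    have hBfcard : Bf.card = 28 := by
      rw [hBfdef, ← Set.ncard_eq_toFinset_card B hBfin, hBcard]
    -- the erased cliques partition the neighbourhood of p₁
    have hcover : Bf.biUnion (fun C => C.erase p₁) = Γ.neighborFinset p₁ := by
      apply Finset.eq_of_subset_of_card_le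
      · intro x hx
        rw [Finset.mem_biUnion] at hx
        obtain ⟨C, hCBf, hxC⟩ := hx
        have hCB : C ∈ B := hBfin.mem_toFinset.mp hCBf
        obtain ⟨hC, hpC⟩ := hBmem C hCB
        rw [SimpleGraph.mem_neighborFinset]
        exact hC.1 hpC (Finset.mem_of_mem_erase hxC) (Finset.ne_of_mem_erase hxC).symm
      · have hdisj : (Bf : Set (Finset V)).PairwiseDisjoint (fun C => C.erase p₁) := by
          intro C₁ hC₁ C₂ hC₂ hne12
          have hC₁B : C₁ ∈ B := hBfin.mem_toFinset.mp hC₁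
          have hC₂B : C₂ ∈ B := hBfin.mem_toFinset.mp hC₂
          simp only [Function.onFun, Finset.disjoint_left]
          intro a ha₁ ha₂
          have : a ∈ C₁ ∩ C₂ :=
            Finset.mem_inter.mpr ⟨Finset.mem_of_mem_erase ha₁, Finset.mem_of_mem_erase ha₂⟩
          rw [hBint C₁ hC₁B C₂ hC₂B hne12] at this
          exact (Finset.ne_of_mem_erase ha₁) (Finset.mem_singleton.mp this)
        rw [Finset.card_biUnion hdisj]
        have hsum : ∑ C ∈ Bf, (C.erase p₁).card = 112 := by
          have : ∀ C ∈ Bf, (C.erase p₁).card = 4 := by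
            intro C hC
            have hCB : C ∈ B := hBfin.mem_toFinset.mp hC
            obtain ⟨hCc, hpC⟩ := hBmem C hCB
            rw [Finset.card_erase_of_mem hpC, hCc.2]
          rw [Finset.sum_congr rfl this, Finset.sum_const, hBfcard, smul_eq_mul]
        rw [hsum, Γ.card_neighborFinset_eq_degree, hΓ.regular p₁]
    have hu : u ∈ Bf.biUnion (fun C => C.erase p₁) := by
      rw [hcover, SimpleGraph.mem_neighborFinset]
      exact h1
    rw [Finset.mem_biUnion] at hu
    obtain ⟨C, hCBf, huC⟩ := hu
    have hCB : C ∈ B := hBfin.mem_toFinset.mp hCBf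
    refine ⟨C, ⟨hCB, Finset.mem_of_mem_erase huC⟩, ?_⟩
    rintro C' ⟨hC'B, huC'⟩
    by_contra hne'
    have : u ∈ C' ∩ C := Finset.mem_inter.mpr ⟨huC', Finset.mem_of_mem_erase huC⟩
    rw [hBint C' hC'B C hCB hne'] at this
    exact h1.ne' (Finset.mem_singleton.mp this)
  · -- there are 56 common neighbours
    have hset : {u : V | Γ.Adj p₁ u ∧ Γ.Adj p₂ u} = Γ.commonNeighbors p₁ p₂ := by
      ext u
      simp [SimpleGraph.mem_commonNeighbors]
    rw [hset, Set.ncard_eq_toFinset_card', Set.toFinset_card]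
    exact hΓ.of_not_adj hne hnadj
end

section
/- Let Γ be a simple graph that is strongly regular with parameters (275,112,30,56), and let C1 and C2 be distinct 5-cliques of Γ with C1 ∩ C2 = {p}. Then every vertex q ∈ C1 with q ≠ p is adjacent to exactly one vertex of C2 \ {p}. -/
open Finset

/-- In an SRG(275,112,30,56), every vertex outside a 5-clique has exactly 2
neighbours in the clique (5-cliques meet the Delsarte/Hoffman bound). -/
lemma srg_275_delsarte
    {V : Type*} [Fintype V] [DecidableEq V] (Γ : SimpleGraph V) [DecidableRel Γ.Adj]
    (hΓ : Γ.IsSRGWith 275 112 30 56)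
    (C : Finset V) (hC : Γ.IsNClique 5 C) {x : V} (hx : x ∉ C) :
    (C.filter (fun c => Γ.Adj x c)).card = 2 := by
  classical
  have hcard : C.card = 5 := hC.card_eq
  -- number of neighbours of c outside C is 108
  have hA : ∀ c ∈ C, (Cᶜ.filter (fun y => Γ.Adj y c)).card = 108 := by
    intro c hc
    have h1 : Cᶜ.filter (fun y => Γ.Adj y c) = Γ.neighborFinset c \ C := by
      ext y
      simp [SimpleGraph.mem_neighborFinset, SimpleGraph.adj_comm, and_comm]
    have h2 : Γ.neighborFinset c ∩ C = C.erase c := by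
      ext y
      simp only [mem_inter, SimpleGraph.mem_neighborFinset, mem_erase]
      constructor
      · rintro ⟨hadj, hyC⟩; exact ⟨fun h => (Γ.irrefl (h ▸ hadj)), hyC⟩
      · rintro ⟨hyc, hyC⟩; exact ⟨hC.isClique hc hyC (Ne.symm hyc), hyC⟩
    have h3 : (Γ.neighborFinset c ∩ C).card + (Γ.neighborFinset c \ C).card
        = (Γ.neighborFinset c).card := card_inter_add_card_sdiff _ _
    rw [h2, card_erase_of_mem hc, hcard] at h3
    rw [h1]
    have hdeg : (Γ.neighborFinset c).card = 112 := by
      rw [Γ.card_neighborFinset_eq_degree]; exact hΓ.regular c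
    omega
  -- number of common neighbours of c ≠ c' (both in C) outside C is 27
  have hB : ∀ c ∈ C, ∀ c' ∈ C, c ≠ c' →
      (Cᶜ.filter (fun y => Γ.Adj y c ∧ Γ.Adj y c')).card = 27 := by
    intro c hc c' hc' hne
    have hadj : Γ.Adj c c' := hC.isClique hc hc' hne
    have hF : (Γ.neighborFinset c ∩ Γ.neighborFinset c').card = 30 := by
      have h30 := hΓ.of_adj c c' hadj
      rw [← h30, ← Set.toFinset_card]
      congr 1
      ext y
      simp [SimpleGraph.mem_commonNeighbors]
    have h1 : Cᶜ.filter (fun y => Γ.Adj y c ∧ Γ.Adj y c')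
        = (Γ.neighborFinset c ∩ Γ.neighborFinset c') \ C := by
      ext y
      simp only [mem_filter, mem_compl, mem_sdiff, mem_inter,
        SimpleGraph.mem_neighborFinset]
      constructor
      · rintro ⟨h, h1, h2⟩; exact ⟨⟨h1.symm, h2.symm⟩, h⟩
      · rintro ⟨⟨h1, h2⟩, h⟩; exact ⟨h, h1.symm, h2.symm⟩
    have h2 : (Γ.neighborFinset c ∩ Γ.neighborFinset c') ∩ C = (C.erase c).erase c' := by
      ext y
      simp only [mem_inter, SimpleGraph.mem_neighborFinset, mem_erase]
      constructor
      · rintro ⟨⟨ha, hb⟩, hyC⟩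
        exact ⟨fun h => Γ.irrefl (h ▸ hb), fun h => Γ.irrefl (h ▸ ha), hyC⟩
      · rintro ⟨hyc', hyc, hyC⟩
        exact ⟨⟨hC.isClique hc hyC (Ne.symm hyc), hC.isClique hc' hyC (Ne.symm hyc')⟩, hyC⟩
    have h3 : ((Γ.neighborFinset c ∩ Γ.neighborFinset c') ∩ C).card
        + ((Γ.neighborFinset c ∩ Γ.neighborFinset c') \ C).card
        = (Γ.neighborFinset c ∩ Γ.neighborFinset c').card := card_inter_add_card_sdiff _ _
    have hc'mem : c' ∈ C.erase c := mem_erase.mpr ⟨Ne.symm hne, hc'⟩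
    rw [h2, card_erase_of_mem hc'mem, card_erase_of_mem hc, hcard, hF] at h3
    rw [h1]
    omega
  -- the two counting identities
  set e : V → ℕ := fun y => (C.filter (fun c => Γ.Adj y c)).card with he
  have hedef : ∀ y, e y = ∑ c ∈ C, if Γ.Adj y c then 1 else 0 := by
    intro y; rw [he]; exact card_filter _ _
  have hS1 : ∑ y ∈ Cᶜ, e y = 540 := by
    simp_rw [hedef]
    rw [Finset.sum_comm]
    rw [Finset.sum_congr rfl (fun c hc => (card_filter _ _).symm.trans (hA c hc))]
    rw [Finset.sum_const, hcard]; rfl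
  have hS2 : ∑ y ∈ Cᶜ, e y * e y = 1080 := by
    have hexp : ∀ y, e y * e y
        = ∑ c ∈ C, ∑ c' ∈ C, if Γ.Adj y c ∧ Γ.Adj y c' then 1 else 0 := by
      intro y
      rw [hedef, Finset.sum_mul_sum]
      refine Finset.sum_congr rfl fun c _ => Finset.sum_congr rfl fun c' _ => ?_
      by_cases h1 : Γ.Adj y c <;> by_cases h2 : Γ.Adj y c' <;> simp [h1, h2]
    simp_rw [hexp]
    rw [Finset.sum_comm]
    have houter : ∀ c ∈ C,
        (∑ y ∈ Cᶜ, ∑ c' ∈ C, if Γ.Adj y c ∧ Γ.Adj y c' then 1 else 0) = 216 := by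
      intro c hc
      rw [Finset.sum_comm]
      have hin : ∀ c' ∈ C, (∑ y ∈ Cᶜ, if Γ.Adj y c ∧ Γ.Adj y c' then 1 else 0)
          = (if c' = c then 81 else 0) + 27 := by
        intro c' hc'
        by_cases hcc : c' = c
        · subst hcc
          rw [if_pos rfl]
          have : (∑ y ∈ Cᶜ, if Γ.Adj y c' ∧ Γ.Adj y c' then 1 else 0)
              = (Cᶜ.filter (fun y => Γ.Adj y c')).card := by
            rw [card_filter]
            exact Finset.sum_congr rfl fun y _ => by simp
          rw [this, hA c' hc']
        · rw [if_neg hcc, ← card_filter, hB c hc c' hc' (Ne.symm hcc)]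
      rw [Finset.sum_congr rfl hin, Finset.sum_add_distrib, Finset.sum_ite_eq' C c fun _ => 81,
        if_pos hc, Finset.sum_const, hcard]; rfl
    rw [Finset.sum_congr rfl houter, Finset.sum_const, hcard]; rfl
  -- conclude via sum of squares
  have hcompl : Cᶜ.card = 270 := by
    rw [card_compl, hΓ.card, hcard]
  have hzero : ∑ y ∈ Cᶜ, ((e y : ℤ) - 2) ^ 2 = 0 := by
    have hexp : ∀ y ∈ Cᶜ, ((e y : ℤ) - 2) ^ 2
        = (e y * e y : ℕ) - 4 * (e y : ℕ) + 4 := by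
      intro y _; push_cast; ring
    rw [Finset.sum_congr rfl hexp, Finset.sum_add_distrib, Finset.sum_sub_distrib,
      Finset.sum_const, hcompl]
    have h1 : ∑ y ∈ Cᶜ, ((e y * e y : ℕ) : ℤ) = 1080 := by
      rw [← Nat.cast_sum, hS2]; norm_num
    have h2 : ∑ y ∈ Cᶜ, 4 * ((e y : ℕ) : ℤ) = 2160 := by
      rw [← Finset.mul_sum, ← Nat.cast_sum, hS1]; norm_num
    rw [h1, h2]
    norm_num
  have hxmem : x ∈ Cᶜ := mem_compl.mpr hx
  have := (Finset.sum_eq_zero_iff_of_nonneg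
    (fun y _ => sq_nonneg ((e y : ℤ) - 2))).mp hzero x hxmem
  have : (e x : ℤ) = 2 := by nlinarith [this]
  exact_mod_cast this

/-- Let Γ be a strongly regular graph with parameters (275,112,30,56), and let C₁
and C₂ be distinct 5-cliques of Γ with C₁ ∩ C₂ = {p}.  Then every vertex q ∈ C₁
with q ≠ p is adjacent to exactly one vertex of C₂ \ {p}. -/
theorem srg_275_cliques_meeting_in_point
    {V : Type*} [Fintype V] [DecidableEq V] (Γ : SimpleGraph V) [DecidableRel Γ.Adj]
    (hΓ : Γ.IsSRGWith 275 112 30 56)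
    (p : V) (C₁ C₂ : Finset V) (hC₁ : Γ.IsNClique 5 C₁) (hC₂ : Γ.IsNClique 5 C₂)
    (hne : C₁ ≠ C₂) (hint : C₁ ∩ C₂ = {p})
    (q : V) (hq : q ∈ C₁) (hqp : q ≠ p) :
    {u : V | u ∈ C₂ ∧ u ≠ p ∧ Γ.Adj q u}.ncard = 1 := by
  classical
  have hpC : p ∈ C₁ ∩ C₂ := by rw [hint]; exact mem_singleton_self p
  have hpC₂ : p ∈ C₂ := (mem_inter.mp hpC).2
  have hqC₂ : q ∉ C₂ := by
    intro h
    have : q ∈ C₁ ∩ C₂ := mem_inter.mpr ⟨hq, h⟩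
    rw [hint, mem_singleton] at this
    exact hqp this
  have h2 : (C₂.filter (fun c => Γ.Adj q c)).card = 2 :=
    srg_275_delsarte Γ hΓ C₂ hC₂ hqC₂
  have hqp' : Γ.Adj q p := hC₁.isClique hq (mem_inter.mp hpC).1 hqp
  have hpmem : p ∈ C₂.filter (fun c => Γ.Adj q c) := mem_filter.mpr ⟨hpC₂, hqp'⟩
  have hset : {u : V | u ∈ C₂ ∧ u ≠ p ∧ Γ.Adj q u}
      = ↑((C₂.filter (fun c => Γ.Adj q c)).erase p) := by
    ext u
    simp only [Set.mem_setOf_eq, coe_erase, Set.mem_diff, mem_coe, mem_filter,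
      Set.mem_singleton_iff]
    tauto
  rw [hset, Set.ncard_coe_finset, card_erase_of_mem hpmem, h2]
end

section
/- Let Γ be a simple graph that is strongly regular with parameters (275,112,30,56), let p be a vertex of Γ, and let B be a bundle through p. Then the number of edges {q,r} of Γ such that q and r both differ from p and q and r lie in distinct members of B is exactly 1512 (= C(28,2)·4). -/
/-- Let Γ be a strongly regular graph with parameters (275,112,30,56), let p be a
vertex, and let B be a bundle through p (a set of 28 5-cliques pairwise
intersecting exactly in {p}).  Then the number of edges {q,r} of Γ such that q and
r both differ from p and lie in distinct members of B is exactly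
1512 = C(28,2)·4. -/
theorem srg_275_bundle_cross_edges_count
    {V : Type*} [Fintype V] [DecidableEq V] (Γ : SimpleGraph V) [DecidableRel Γ.Adj]
    (hΓ : Γ.IsSRGWith 275 112 30 56)
    (p : V) (B : Set (Finset V)) (hBcard : B.ncard = 28)
    (hBmem : ∀ C ∈ B, Γ.IsNClique 5 C ∧ p ∈ C)
    (hBint : ∀ C₁ ∈ B, ∀ C₂ ∈ B, C₁ ≠ C₂ → C₁ ∩ C₂ = {p}) :
    {e : Sym2 V | ∃ q r : V, e = s(q, r) ∧ Γ.Adj q r ∧ q ≠ p ∧ r ≠ p ∧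
      ∃ C₁ ∈ B, ∃ C₂ ∈ B, C₁ ≠ C₂ ∧ q ∈ C₁ ∧ r ∈ C₂}.ncard = 1512 := by
  classical
  have hBfin : B.Finite := Set.finite_of_ncard_ne_zero (by omega)
  set BF : Finset (Finset V) := hBfin.toFinset with hBFdef
  have hmemBF : ∀ C : Finset V, C ∈ BF ↔ C ∈ B := fun C => hBfin.mem_toFinset
  have hBFcard : BF.card = 28 := by
    rw [← hBcard, Set.ncard_eq_toFinset_card _ hBfin]
  -- basic facts about the cliques
  have hclq : ∀ C ∈ BF, Γ.IsNClique 5 C ∧ p ∈ C := fun C hC => hBmem C ((hmemBF C).1 hC)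
  have hint : ∀ C₁ ∈ BF, ∀ C₂ ∈ BF, C₁ ≠ C₂ → C₁ ∩ C₂ = {p} := fun C₁ h₁ C₂ h₂ hne =>
    hBint C₁ ((hmemBF C₁).1 h₁) C₂ ((hmemBF C₂).1 h₂) hne
  have huniq : ∀ {x : V} {C₁ C₂ : Finset V}, C₁ ∈ BF → C₂ ∈ BF → x ∈ C₁ → x ∈ C₂ →
      x ≠ p → C₁ = C₂ := by
    intro x C₁ C₂ h₁ h₂ hx₁ hx₂ hxp
    by_contra hne
    have : x ∈ C₁ ∩ C₂ := Finset.mem_inter.2 ⟨hx₁, hx₂⟩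
    rw [hint C₁ h₁ C₂ h₂ hne] at this
    exact hxp (Finset.mem_singleton.1 this)
  have hcard5 : ∀ C ∈ BF, C.card = 5 := fun C hC => (hclq C hC).1.2
  have hpC : ∀ C ∈ BF, p ∈ C := fun C hC => (hclq C hC).2
  have herase4 : ∀ C ∈ BF, (C.erase p).card = 4 := by
    intro C hC
    rw [Finset.card_erase_of_mem (hpC C hC), hcard5 C hC]
  -- the union of the punctured cliques
  set U : Finset V := BF.biUnion (fun C => C.erase p) with hUdef
  have hdisj : ∀ C₁ ∈ BF, ∀ C₂ ∈ BF, C₁ ≠ C₂ → Disjoint (C₁.erase p) (C₂.erase p) := by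
    intro C₁ h₁ C₂ h₂ hne
    rw [Finset.disjoint_left]
    intro x hx₁ hx₂
    have hx : x ∈ C₁ ∩ C₂ := Finset.mem_inter.2 ⟨Finset.mem_of_mem_erase hx₁,
      Finset.mem_of_mem_erase hx₂⟩
    rw [hint C₁ h₁ C₂ h₂ hne] at hx
    exact (Finset.ne_of_mem_erase hx₁) (Finset.mem_singleton.1 hx)
  have hUcard : U.card = 112 := by
    rw [hUdef, Finset.card_biUnion hdisj]
    rw [Finset.sum_congr rfl herase4, Finset.sum_const, hBFcard]; rfl
  have hUmemne : ∀ q ∈ U, q ≠ p := by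
    intro q hq
    obtain ⟨C, hC, hqC⟩ := Finset.mem_biUnion.1 hq
    exact Finset.ne_of_mem_erase hqC
  have hUadj : ∀ q ∈ U, Γ.Adj p q := by
    intro q hq
    obtain ⟨C, hC, hqC⟩ := Finset.mem_biUnion.1 hq
    exact (hclq C hC).1.1 (by simpa using hpC C hC) (by simpa using Finset.mem_of_mem_erase hqC)
      (Ne.symm (Finset.ne_of_mem_erase hqC))
  have hUsub : U ⊆ Γ.neighborFinset p := fun q hq =>
    (SimpleGraph.mem_neighborFinset Γ p q).2 (hUadj q hq)
  have hU : U = Γ.neighborFinset p := by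
    apply Finset.eq_of_subset_of_card_le hUsub
    rw [SimpleGraph.card_neighborFinset_eq_degree, hΓ.regular p, hUcard]
  -- the key per-vertex count
  have key : ∀ q ∈ U, ∀ C ∈ BF, q ∈ C → ((Γ.neighborFinset q ∩ U) \ C).card = 27 := by
    intro q hqU C hC hqC
    have hqp : q ≠ p := hUmemne q hqU
    have hadj : Γ.Adj q p := (hUadj q hqU).symm
    have hA : (Γ.neighborFinset q ∩ U).card = 30 := by
      have heq : Γ.neighborFinset q ∩ Γ.neighborFinset p = (Γ.commonNeighbors q p).toFinset := by
        ext r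
        simp [SimpleGraph.mem_commonNeighbors]
      rw [hU, heq, Set.toFinset_card, hΓ.of_adj q p hadj]
    have hAC : (Γ.neighborFinset q ∩ U) ∩ C = (C.erase p).erase q := by
      ext r
      simp only [Finset.mem_inter, SimpleGraph.mem_neighborFinset, Finset.mem_erase]
      constructor
      · rintro ⟨⟨hadj', hrU⟩, hrC⟩
        exact ⟨(Γ.ne_of_adj hadj').symm, hUmemne r hrU, hrC⟩
      · rintro ⟨hrq, hrp, hrC⟩
        refine ⟨⟨(hclq C hC).1.1 (by simpa using hqC) (by simpa using hrC) (Ne.symm hrq), ?_⟩, hrC⟩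
        exact Finset.mem_biUnion.2 ⟨C, hC, Finset.mem_erase.2 ⟨hrp, hrC⟩⟩
    have hACcard : ((Γ.neighborFinset q ∩ U) ∩ C).card = 3 := by
      rw [hAC, Finset.card_erase_of_mem (Finset.mem_erase.2 ⟨hqp, hqC⟩), herase4 C hC]
    have := Finset.card_inter_add_card_sdiff (Γ.neighborFinset q ∩ U) C
    omega
  -- ordered pairs
  set Pd : Finset (V × V) := Finset.univ.filter (fun x => Γ.Adj x.1 x.2 ∧ x.1 ≠ p ∧ x.2 ≠ p ∧
      ∃ C₁ ∈ BF, ∃ C₂ ∈ BF, C₁ ≠ C₂ ∧ x.1 ∈ C₁ ∧ x.2 ∈ C₂) with hPdef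
  have hPmem : ∀ x : V × V, x ∈ Pd ↔ (Γ.Adj x.1 x.2 ∧ x.1 ≠ p ∧ x.2 ≠ p ∧
      ∃ C₁ ∈ BF, ∃ C₂ ∈ BF, C₁ ≠ C₂ ∧ x.1 ∈ C₁ ∧ x.2 ∈ C₂) := by
    intro x; simp [hPdef]
  have hfst : ∀ x ∈ Pd, x.1 ∈ U := by
    intro x hx
    obtain ⟨_, hq, _, C₁, hC₁, _, _, _, hqC₁, _⟩ := (hPmem x).1 hx
    exact Finset.mem_biUnion.2 ⟨C₁, hC₁, Finset.mem_erase.2 ⟨hq, hqC₁⟩⟩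
  have hPdcard : Pd.card = 3024 := by
    rw [Finset.card_eq_sum_card_fiberwise hfst]
    have hfib : ∀ q ∈ U, (Pd.filter (fun x => x.1 = q)).card = 27 := by
      intro q hqU
      obtain ⟨C, hC, hqCe⟩ := Finset.mem_biUnion.1 hqU
      have hqC : q ∈ C := Finset.mem_of_mem_erase hqCe
      have hqp : q ≠ p := Finset.ne_of_mem_erase hqCe
      have himg : Pd.filter (fun x => x.1 = q) =
          ((Γ.neighborFinset q ∩ U) \ C).image (fun r => (q, r)) := by
        ext x
        simp only [Finset.mem_filter, Finset.mem_image, Finset.mem_sdiff, Finset.mem_inter,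
          SimpleGraph.mem_neighborFinset]
        constructor
        · rintro ⟨hx, rfl⟩
          obtain ⟨hadj', _, hrp, C₁, hC₁, C₂, hC₂, hne, hqC₁, hrC₂⟩ := (hPmem x).1 hx
          have hC₁C : C₁ = C := huniq hC₁ hC hqC₁ hqC hqp
          refine ⟨x.2, ⟨⟨hadj', Finset.mem_biUnion.2 ⟨C₂, hC₂, Finset.mem_erase.2 ⟨hrp, hrC₂⟩⟩⟩,
            ?_⟩, rfl⟩
          intro hrC
          have : x.2 ∈ C ∩ C₂ := Finset.mem_inter.2 ⟨hrC, hrC₂⟩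
          rw [hint C hC C₂ hC₂ (hC₁C ▸ hne)] at this
          exact hrp (Finset.mem_singleton.1 this)
        · rintro ⟨r, ⟨⟨hadj', hrU⟩, hrC⟩, rfl⟩
          obtain ⟨C₂, hC₂, hrCe⟩ := Finset.mem_biUnion.1 hrU
          refine ⟨(hPmem (q, r)).2 ⟨hadj', hqp, hUmemne r hrU, C, hC, C₂, hC₂, ?_,
            hqC, Finset.mem_of_mem_erase hrCe⟩, rfl⟩
          rintro rfl
          exact hrC (Finset.mem_of_mem_erase hrCe)
      rw [himg, Finset.card_image_of_injective _ (fun a b h => by simpa using h),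
        key q hqU C hC hqC]
    rw [Finset.sum_congr rfl hfib, Finset.sum_const, hUcard]; rfl
  -- symmetry of Pd
  have hsym : ∀ x : V × V, x ∈ Pd → (x.2, x.1) ∈ Pd := by
    intro x hx
    obtain ⟨hadj', hq, hr, C₁, hC₁, C₂, hC₂, hne, hqC₁, hrC₂⟩ := (hPmem x).1 hx
    exact (hPmem (x.2, x.1)).2 ⟨hadj'.symm, hr, hq, C₂, hC₂, C₁, hC₁, hne.symm, hrC₂, hqC₁⟩
  -- pass to unordered pairs
  set T : Finset (Sym2 V) := Pd.image (fun x => s(x.1, x.2)) with hTdef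
  have hTcard : T.card = 1512 := by
    have hsum : Pd.card = ∑ e ∈ T, (Pd.filter (fun x => s(x.1, x.2) = e)).card :=
      Finset.card_eq_sum_card_image (fun x => s(x.1, x.2)) Pd
    have hfib2 : ∀ e ∈ T, (Pd.filter (fun x => s(x.1, x.2) = e)).card = 2 := by
      intro e he
      obtain ⟨⟨q, r⟩, hqr, rfl⟩ := Finset.mem_image.1 he
      have hadj' : Γ.Adj q r := ((hPmem (q, r)).1 hqr).1
      have hne : q ≠ r := Γ.ne_of_adj hadj'
      have : Pd.filter (fun x => s(x.1, x.2) = s(q, r)) = {(q, r), (r, q)} := by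
        ext x
        simp only [Finset.mem_filter, Finset.mem_insert, Finset.mem_singleton, Sym2.eq_iff]
        constructor
        · rintro ⟨hx, (⟨rfl, rfl⟩ | ⟨rfl, rfl⟩)⟩
          · left; rfl
          · right; rfl
        · rintro (rfl | rfl)
          · exact ⟨hqr, Or.inl ⟨rfl, rfl⟩⟩
          · exact ⟨hsym (q, r) hqr, Or.inr ⟨rfl, rfl⟩⟩
      rw [this, Finset.card_insert_of_notMem (by simp [hne, hne.symm, Prod.ext_iff]),
        Finset.card_singleton]
    rw [hsum, Finset.sum_congr rfl hfib2, Finset.sum_const, smul_eq_mul] at hPdcard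
    omega
  -- identify the set with ↑T
  have hS : {e : Sym2 V | ∃ q r : V, e = s(q, r) ∧ Γ.Adj q r ∧ q ≠ p ∧ r ≠ p ∧
      ∃ C₁ ∈ B, ∃ C₂ ∈ B, C₁ ≠ C₂ ∧ q ∈ C₁ ∧ r ∈ C₂} = ↑T := by
    ext e
    simp only [Set.mem_setOf_eq, hTdef, Finset.coe_image, Set.mem_image, Finset.mem_coe]
    constructor
    · rintro ⟨q, r, rfl, hadj', hq, hr, C₁, hC₁, C₂, hC₂, hne, hqC₁, hrC₂⟩
      exact ⟨(q, r), (hPmem (q, r)).2 ⟨hadj', hq, hr, C₁, (hmemBF C₁).2 hC₁, C₂,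
        (hmemBF C₂).2 hC₂, hne, hqC₁, hrC₂⟩, rfl⟩
    · rintro ⟨⟨q, r⟩, hqr, rfl⟩
      obtain ⟨hadj', hq, hr, C₁, hC₁, C₂, hC₂, hne, hqC₁, hrC₂⟩ := (hPmem (q, r)).1 hqr
      exact ⟨q, r, rfl, hadj', hq, hr, C₁, (hmemBF C₁).1 hC₁, C₂, (hmemBF C₂).1 hC₂,
        hne, hqC₁, hrC₂⟩
  rw [hS, Set.ncard_coe_finset, hTcard]
end

section
/- Let s, t, α be positive integers with α ≤ min(s+1, t+1), and let Γ be a pseudogeometric (s,t,α)-graph, i.e., a simple graph on v vertices that is strongly regular with parameters (v, s(t+1), s−1+t(α−1), (t+1)α) where α·v = (s+1)(st+α). If P is a partial linear space with parameters (s,t) whose point graph is Γ (i.e., two distinct points of P are collinear in P exactly when they are adjacent in Γ), then P is a partial geometry with parameters (s,t,α): for every point p and line L of P with p not incident with L, there are exactly α lines of P incident with p meeting L. -/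
/-- Let Γ be a pseudogeometric (s,t,α)-graph (a strongly regular graph with
parameters (v, s(t+1), s−1+t(α−1), (t+1)α), where α·v = (s+1)(st+α)), for positive
integers s, t, α with α ≤ min(s+1, t+1).  If P is a partial linear space with
parameters (s,t) whose point graph is Γ, then P is a partial geometry with
parameters (s,t,α): for every non-incident point-line pair (p,l) there are exactly
α lines through p meeting l. -/
theorem pls_on_pseudogeometric_graph_is_partial_geometry
    {P : Type*} [Fintype P] {L : Type*} [Finite L]
    (s t α : ℕ) (hs : 0 < s) (ht : 0 < t) (hα : 0 < α)
    (hαs : α ≤ s + 1) (hαt : α ≤ t + 1)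
    (Γ : SimpleGraph P) [DecidableRel Γ.Adj]
    (hcard : α * Fintype.card P = (s + 1) * (s * t + α))
    (hΓ : Γ.IsSRGWith (Fintype.card P) (s * (t + 1)) (s - 1 + t * (α - 1)) ((t + 1) * α))
    (I : P → L → Prop)
    (line_size : ∀ l : L, {p : P | I p l}.ncard = s + 1)
    (point_degree : ∀ p : P, {l : L | I p l}.ncard = t + 1)
    (linear : ∀ p q : P, p ≠ q → {l : L | I p l ∧ I q l}.ncard ≤ 1)
    (hpointgraph : ∀ p q : P, p ≠ q → (Γ.Adj p q ↔ ∃ l : L, I p l ∧ I q l)) :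
    ∀ (p : P) (l : L), ¬ I p l →
      {m : L | I p m ∧ ∃ q : P, I q m ∧ I q l}.ncard = α := by
  classical
  intro p l hpl
  -- unique line through two collinear points
  have huniq : ∀ (a b : P), a ≠ b → ∀ m m' : L, I a m → I b m → I a m' → I b m' → m = m' := by
    intro a b hab m m' h1 h2 h3 h4
    have hfin : {l : L | I a l ∧ I b l}.Finite := Set.toFinite _
    exact (Set.ncard_le_one_iff hfin).1 (linear a b hab) ⟨h1, h2⟩ ⟨h3, h4⟩
  -- the line set S of points on l
  set S : Finset P := Finset.univ.filter (fun q => I q l) with hSdef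
  have hSmem : ∀ q, q ∈ S ↔ I q l := by intro q; simp [hSdef]
  have hScard : S.card = s + 1 := by
    have h := line_size l
    rwa [Set.ncard_eq_toFinset_card', Set.toFinset_setOf] at h
  -- points on l are pairwise adjacent
  have hadjS : ∀ q ∈ S, ∀ q' ∈ S, q ≠ q' → Γ.Adj q q' := by
    intro q hq q' hq' hne
    exact (hpointgraph q q' hne).2 ⟨l, (hSmem q).1 hq, (hSmem q').1 hq'⟩
  -- neighbors of q ∈ S inside S form S.erase q
  have hnbrS : ∀ q ∈ S, (Γ.neighborFinset q).filter (· ∈ S) = S.erase q := by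
    intro q hq
    ext r
    simp only [Finset.mem_filter, SimpleGraph.mem_neighborFinset, Finset.mem_erase]
    constructor
    · rintro ⟨hadj, hr⟩; exact ⟨hadj.ne', hr⟩
    · rintro ⟨hne, hr⟩; exact ⟨hadjS q hq r hr (Ne.symm hne), hr⟩
  -- number of neighbours of q ∈ S outside S
  have hoff : ∀ q ∈ S, (Finset.univ.filter (fun p => p ∉ S ∧ Γ.Adj p q)).card = s * t := by
    intro q hq
    have hsplit := Finset.card_filter_add_card_filter_not
      (s := Γ.neighborFinset q) (p := (· ∈ S))
    rw [hnbrS q hq, SimpleGraph.card_neighborFinset_eq_degree, hΓ.regular q,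
      Finset.card_erase_of_mem hq, hScard] at hsplit
    have heq : Finset.univ.filter (fun p => p ∉ S ∧ Γ.Adj p q)
        = (Γ.neighborFinset q).filter (fun p => ¬ p ∈ S) := by
      ext r
      simp only [Finset.mem_filter, SimpleGraph.mem_neighborFinset, Finset.mem_univ, true_and]
      constructor
      · rintro ⟨h1, h2⟩; exact ⟨h2.symm, h1⟩
      · rintro ⟨h1, h2⟩; exact ⟨h2, h1.symm⟩
    rw [heq]
    have : s * (t + 1) = s * t + s := by ring
    omega
  -- common neighbours of distinct q q' ∈ S outside S
  have hcommonoff : ∀ q ∈ S, ∀ q' ∈ S, q ≠ q' →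
      (Finset.univ.filter (fun p => p ∉ S ∧ Γ.Adj p q ∧ Γ.Adj p q')).card = t * (α - 1) := by
    intro q hq q' hq' hne
    have htot : ((Γ.commonNeighbors q q').toFinset).card = s - 1 + t * (α - 1) := by
      rw [Set.toFinset_card]
      exact hΓ.of_adj q q' (hadjS q hq q' hq' hne)
    have hsplit := Finset.card_filter_add_card_filter_not
      (s := (Γ.commonNeighbors q q').toFinset) (p := (· ∈ S))
    have hin : ((Γ.commonNeighbors q q').toFinset).filter (· ∈ S) = (S.erase q).erase q' := by
      ext r
      simp only [Finset.mem_filter, Set.mem_toFinset, SimpleGraph.mem_commonNeighbors,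
        Finset.mem_erase]
      constructor
      · rintro ⟨⟨h1, h2⟩, hr⟩; exact ⟨h2.ne', ⟨h1.ne', hr⟩⟩
      · rintro ⟨hne2, hne1, hr⟩
        exact ⟨⟨hadjS q hq r hr (Ne.symm hne1), hadjS q' hq' r hr (Ne.symm hne2)⟩, hr⟩
    have hq'e : q' ∈ S.erase q := Finset.mem_erase.2 ⟨Ne.symm hne, hq'⟩
    have hincard : (((Γ.commonNeighbors q q').toFinset).filter (· ∈ S)).card = s - 1 := by
      rw [hin, Finset.card_erase_of_mem hq'e, Finset.card_erase_of_mem hq, hScard]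
      omega
    have heq : Finset.univ.filter (fun p => p ∉ S ∧ Γ.Adj p q ∧ Γ.Adj p q')
        = ((Γ.commonNeighbors q q').toFinset).filter (fun p => ¬ p ∈ S) := by
      ext r
      simp only [Finset.mem_filter, Set.mem_toFinset, SimpleGraph.mem_commonNeighbors,
        Finset.mem_univ, true_and]
      constructor
      · rintro ⟨h1, h2, h3⟩; exact ⟨⟨h2.symm, h3.symm⟩, h1⟩
      · rintro ⟨⟨h2, h3⟩, h1⟩; exact ⟨h1, h2.symm, h3.symm⟩
    rw [heq]
    omega
  -- n p = number of neighbours of p on l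
  set Tc : Finset P := Finset.univ.filter (fun p => p ∉ S) with hTdef
  set n : P → ℕ := fun p => (S.filter (fun q => Γ.Adj p q)).card with hndef
  -- first moment
  have hsum1 : ∑ x ∈ Tc, n x = (s + 1) * (s * t) := by
    have : ∑ x ∈ Tc, n x = ∑ q ∈ S, (Tc.filter (fun x => Γ.Adj x q)).card := by
      simp only [hndef, Finset.card_filter]
      rw [Finset.sum_comm]
    rw [this]
    have : ∀ q ∈ S, (Tc.filter (fun x => Γ.Adj x q)).card = s * t := by
      intro q hq
      rw [show Tc.filter (fun x => Γ.Adj x q)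
          = Finset.univ.filter (fun p => p ∉ S ∧ Γ.Adj p q) by
        ext r; simp [hTdef, Finset.mem_filter, and_assoc]]
      exact hoff q hq
    rw [Finset.sum_congr rfl this, Finset.sum_const, hScard, smul_eq_mul]
  -- second moment
  have hsum2 : ∑ x ∈ Tc, (n x) ^ 2 = (s + 1) * (s * t) * α := by
    have hexp : ∀ x, (n x) ^ 2 = ∑ q ∈ S, ∑ q' ∈ S,
        (if Γ.Adj x q ∧ Γ.Adj x q' then 1 else 0) := by
      intro x
      rw [sq, hndef]
      simp only [Finset.card_filter]
      rw [Finset.sum_mul_sum]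
      refine Finset.sum_congr rfl fun q _ => Finset.sum_congr rfl fun q' _ => ?_
      by_cases h1 : Γ.Adj x q <;> by_cases h2 : Γ.Adj x q' <;> simp [h1, h2]
    calc ∑ x ∈ Tc, (n x) ^ 2
        = ∑ q ∈ S, ∑ q' ∈ S, (Tc.filter (fun x => Γ.Adj x q ∧ Γ.Adj x q')).card := by
          simp only [hexp, Finset.card_filter]
          rw [Finset.sum_comm]
          refine Finset.sum_congr rfl fun q _ => Finset.sum_comm
      _ = ∑ q ∈ S, (s * t + s * (t * (α - 1))) := by
          refine Finset.sum_congr rfl fun q hq => ?_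
          rw [← Finset.add_sum_erase _ _ hq]
          congr 1
          · rw [show Tc.filter (fun x => Γ.Adj x q ∧ Γ.Adj x q)
                = Finset.univ.filter (fun p => p ∉ S ∧ Γ.Adj p q) by
              ext r; simp [hTdef, Finset.mem_filter, and_assoc, and_self_iff]]
            exact hoff q hq
          · have : ∀ q' ∈ S.erase q, (Tc.filter (fun x => Γ.Adj x q ∧ Γ.Adj x q')).card
                = t * (α - 1) := by
              intro q' hq'
              have hq'S : q' ∈ S := Finset.mem_of_mem_erase hq'
              have hne : q ≠ q' := (Finset.ne_of_mem_erase hq').symm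
              rw [show Tc.filter (fun x => Γ.Adj x q ∧ Γ.Adj x q')
                  = Finset.univ.filter (fun p => p ∉ S ∧ Γ.Adj p q ∧ Γ.Adj p q') by
                ext r; simp [hTdef, Finset.mem_filter, and_assoc]]
              exact hcommonoff q hq q' hq'S hne
            rw [Finset.sum_congr rfl this, Finset.sum_const,
              Finset.card_erase_of_mem hq, hScard, smul_eq_mul, Nat.add_sub_cancel]
      _ = (s + 1) * (s * t) * α := by
          rw [Finset.sum_const, hScard, smul_eq_mul]
          obtain ⟨β, hβ⟩ : ∃ β, α = β + 1 := ⟨α - 1, (Nat.succ_pred_eq_of_pos hα).symm⟩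
          subst hβ
          rw [Nat.add_sub_cancel]
          ring
  -- cardinality of Tc
  have hTcard : (α : ℤ) * Tc.card = (s + 1) * (s * t) := by
    have hsplit := Finset.card_filter_add_card_filter_not
      (s := (Finset.univ : Finset P)) (p := (· ∈ S))
    have h1 : (Finset.univ.filter (· ∈ S)).card = S.card := by
      congr 1; ext r; simp
    rw [h1, hScard, Finset.card_univ] at hsplit
    have h2 : Tc.card = (Finset.univ.filter (fun p => ¬ p ∈ S)).card := rfl
    have hv : α * Fintype.card P = (s + 1) * (s * t) + (s + 1) * α := by
      rw [hcard]; ring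
    have := hsplit
    -- Fintype.card P = (s+1) + Tc.card
    have h3 : Fintype.card P = (s + 1) + Tc.card := by omega
    have : α * ((s + 1) + Tc.card) = (s + 1) * (s * t) + (s + 1) * α := by
      rw [← h3]; exact hv
    have hz := congrArg (fun k : ℕ => (k : ℤ)) this
    push_cast at hz
    linear_combination hz
  -- the sum of squared deviations is zero
  have hzero : ∑ x ∈ Tc, ((n x : ℤ) - α) ^ 2 = 0 := by
    have c1 : (∑ x ∈ Tc, (n x : ℤ) ^ 2) = ((s : ℤ) + 1) * (s * t) * α := by
      have h := congrArg (fun k : ℕ => (k : ℤ)) hsum2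
      push_cast at h
      linarith [h]
    have c2 : (∑ x ∈ Tc, (n x : ℤ)) = ((s : ℤ) + 1) * (s * t) := by
      have h := congrArg (fun k : ℕ => (k : ℤ)) hsum1
      push_cast at h
      linarith [h]
    calc ∑ x ∈ Tc, ((n x : ℤ) - α) ^ 2
        = ∑ x ∈ Tc, ((n x : ℤ) ^ 2 - 2 * α * (n x : ℤ) + α ^ 2) :=
          Finset.sum_congr rfl (fun x _ => by ring)
      _ = (∑ x ∈ Tc, (n x : ℤ) ^ 2) - 2 * α * (∑ x ∈ Tc, (n x : ℤ)) + Tc.card * α ^ 2 := by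
          rw [Finset.sum_add_distrib, Finset.sum_sub_distrib, Finset.mul_sum, Finset.sum_const,
            nsmul_eq_mul]
      _ = 0 := by rw [c1, c2]; linear_combination (α : ℤ) * hTcard
  have hnval : ∀ x ∈ Tc, n x = α := by
    intro x hx
    have h0 := (Finset.sum_eq_zero_iff_of_nonneg
      (fun i _ => sq_nonneg ((n i : ℤ) - α))).1 hzero x hx
    have h1 : (n x : ℤ) = α := sub_eq_zero.1 (sq_eq_zero_iff.1 h0)
    exact_mod_cast h1
  -- bijection between lines through p meeting l and neighbours of p on l
  have hpS : p ∉ S := fun h => hpl ((hSmem p).1 h)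
  have hpT : p ∈ Tc := by simp [hTdef, hpS]
  have hnp : n p = α := hnval p hpT
  set f : P → L := fun q => if h : ∃ m : L, I p m ∧ I q m then h.choose else l with hfdef
  have hf : ∀ q, Γ.Adj p q → I p (f q) ∧ I q (f q) := by
    intro q hadj
    have hne : p ≠ q := Γ.ne_of_adj hadj
    have hex : ∃ m : L, I p m ∧ I q m := (hpointgraph p q hne).1 hadj
    simp only [hfdef, dif_pos hex]
    exact hex.choose_spec
  have himg : {m : L | I p m ∧ ∃ q : P, I q m ∧ I q l} = f '' {q : P | I q l ∧ Γ.Adj p q} := by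
    ext m
    simp only [Set.mem_setOf_eq, Set.mem_image]
    constructor
    · rintro ⟨hpm, q, hqm, hql⟩
      have hne : p ≠ q := fun h => hpl (h ▸ hql)
      have hadj : Γ.Adj p q := (hpointgraph p q hne).2 ⟨m, hpm, hqm⟩
      refine ⟨q, ⟨hql, hadj⟩, ?_⟩
      obtain ⟨h1, h2⟩ := hf q hadj
      exact huniq p q hne (f q) m h1 h2 hpm hqm
    · rintro ⟨q, ⟨hql, hadj⟩, rfl⟩
      obtain ⟨h1, h2⟩ := hf q hadj
      exact ⟨h1, q, h2, hql⟩
  have hinj : Set.InjOn f {q : P | I q l ∧ Γ.Adj p q} := by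
    rintro q₁ ⟨hq₁l, ha₁⟩ q₂ ⟨hq₂l, ha₂⟩ hfe
    by_contra hne
    obtain ⟨h1, h2⟩ := hf q₁ ha₁
    obtain ⟨h3, h4⟩ := hf q₂ ha₂
    rw [hfe] at h1 h2
    have heq : f q₂ = l := huniq q₁ q₂ hne (f q₂) l h2 h4 hq₁l hq₂l
    exact hpl (heq ▸ h1)
  rw [himg, Set.ncard_image_of_injOn hinj]
  have hQ : {q : P | I q l ∧ Γ.Adj p q}.ncard = n p := by
    rw [Set.ncard_eq_toFinset_card', Set.toFinset_setOf, hndef]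
    congr 1
    ext q
    simp only [Finset.mem_filter, Finset.mem_univ, true_and, hSmem]
  rw [hQ, hnp]
end
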